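/- arXiv:2010.10976 — 6 statements merged into one kernel-verified Lean document; each statement's English description precedes it below -/
import Mathlib

section
/- Let B : ℝ² × ℝ² → ℝ² be a symmetric bilinear map, let u(θ) = (cos θ, sin θ) and η(θ) = B(u(θ), u(θ)). Then η is differentiable with η′(θ) = 2·B(u(θ), (−sin θ, cos θ)), and for every θ the following are equivalent: (a) the vectors η(θ) and η′(θ) are linearly dependent; (b) there exists a nonzero w ∈ ℝ² with B(u(θ), w) = 0; (c) there exists a nonzero ν ∈ ℝ² such that ⟨B(u(θ), w), ν⟩ = 0 for all w ∈ ℝ². -/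
/-!
Write `T = B (u θ)`, an endomorphism of `ℝ²`, and `u⊥ = (-sin θ, cos θ)`. By symmetry of `B`
the derivative of `η` is `2 • T u⊥`, so `η θ` and `η' θ` are, up to the factor `2`, the images
under `T` of the orthonormal basis `u θ, u⊥`; they are dependent exactly when `T` is not
injective. In finite dimension that means `T` is not surjective, i.e. its range is orthogonal
to some `ν ≠ 0`.
-/

open Real

theorem LinearMap.hasDerivAt_apply_self_of_symm {𝕜 E F : Type*} [NontriviallyNormedField 𝕜]
    [CompleteSpace 𝕜] [NormedAddCommGroup E] [NormedSpace 𝕜 E] [FiniteDimensional 𝕜 E]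
    [NormedAddCommGroup F] [NormedSpace 𝕜 F] (B : E →ₗ[𝕜] E →ₗ[𝕜] F)
    (hB : ∀ x y, B x y = B y x) {u : 𝕜 → E} {u' : E} {t : 𝕜} (hu : HasDerivAt u u' t) :
    HasDerivAt (fun s => B (u s) (u s)) ((2 : 𝕜) • B (u t) u') t := by
  let Bc : E →L[𝕜] E →L[𝕜] F :=
    LinearMap.toContinuousLinearMap (LinearMap.toContinuousLinearMap.toLinearMap ∘ₗ B)
  have hBc : ∀ x y, Bc x y = B x y := fun _ _ => rfl
  have h := Bc.hasDerivAt_of_bilinear (fun _ => hu) (fun _ => hu)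
  simp only [hBc] at h
  rwa [hB u', ← two_smul 𝕜] at h

theorem Module.Basis.linearIndependent_comp_iff_injective {ι R M N : Type*} [Ring R]
    [AddCommGroup M] [Module R M] [AddCommGroup N] [Module R N] (b : Module.Basis ι R M)
    (f : M →ₗ[R] N) : LinearIndependent R (f ∘ b) ↔ Function.Injective f := by
  refine ⟨fun h => ?_, fun h => b.linearIndependent.map' f (LinearMap.ker_eq_bot.mpr h)⟩
  rw [LinearIndependent, Finsupp.linearCombination_linear_comp, LinearMap.coe_comp] at h
  exact h.of_comp_right fun x => ⟨b.repr x, by simp [Module.Basis.linearCombination_repr]⟩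

theorem LinearMap.not_surjective_iff_exists_orthogonal {M : Type*} [AddCommGroup M] [Module ℝ M]
    (T : M →ₗ[ℝ] ℝ × ℝ) :
    ¬ Function.Surjective T ↔
      ∃ ν : ℝ × ℝ, ν ≠ 0 ∧ ∀ w, (T w).1 * ν.1 + (T w).2 * ν.2 = 0 := by
  constructor
  · intro hT
    obtain ⟨f, hf, hker⟩ := (LinearMap.range T).exists_le_ker_of_lt_top
      (lt_top_iff_ne_top.mpr (LinearMap.range_eq_top.not.mpr hT))
    have hf_apply : ∀ x : ℝ × ℝ, f x = x.1 * f (1, 0) + x.2 * f (0, 1) := fun x => by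
      conv_lhs => rw [show x = x.1 • ((1 : ℝ), (0 : ℝ)) + x.2 • ((0 : ℝ), (1 : ℝ)) by ext <;> simp]
      rw [map_add, map_smul, map_smul, smul_eq_mul, smul_eq_mul]
    refine ⟨(f (1, 0), f (0, 1)), fun h0 => hf (LinearMap.ext fun x => ?_), fun w => ?_⟩
    · have h10 : f (1, 0) = 0 := congrArg Prod.fst h0
      have h01 : f (0, 1) = 0 := congrArg Prod.snd h0
      rw [hf_apply, h10, h01, mul_zero, mul_zero, add_zero, LinearMap.zero_apply]
    · rw [← hf_apply]
      exact hker (LinearMap.mem_range_self T w)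
  · rintro ⟨ν, hν, hTν⟩ hT
    obtain ⟨w, hw⟩ := hT ν
    have h := hTν w
    rw [hw] at h
    obtain ⟨h1, h2⟩ := mul_self_add_mul_self_eq_zero.mp h
    exact hν (Prod.ext h1 h2)

noncomputable def rotatedBasis (θ : ℝ) : Module.Basis (Fin 2) ℝ (ℝ × ℝ) :=
  basisOfLinearIndependentOfCardEqFinrank (b := ![(cos θ, sin θ), (-sin θ, cos θ)])
    (LinearIndependent.pair_iff.mpr fun s t h => by
      simp only [Prod.ext_iff, Prod.fst_add, Prod.snd_add, Prod.smul_fst, Prod.smul_snd,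
        smul_eq_mul, Prod.fst_zero, Prod.snd_zero] at h
      have h1 := cos_sq_add_sin_sq θ
      exact ⟨by linear_combination cos θ * h.1 + sin θ * h.2 - s * h1,
        by linear_combination -sin θ * h.1 + cos θ * h.2 - t * h1⟩)
    (by simp)

theorem coe_rotatedBasis (θ : ℝ) : ⇑(rotatedBasis θ) = ![(cos θ, sin θ), (-sin θ, cos θ)] :=
  coe_basisOfLinearIndependentOfCardEqFinrank _ _

/-- For a symmetric bilinear map `B : ℝ² × ℝ² → ℝ²`, with `u θ = (cos θ, sin θ)` and
`η θ = B (u θ) (u θ)`, the curve `η` has derivative `2 • B (u θ) (−sin θ, cos θ)` at `θ`,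
and the following are equivalent: (a) `η θ` and `η′ θ` are linearly dependent;
(b) there is a nonzero `w` with `B (u θ) w = 0`; (c) there is a nonzero `ν` with
`⟨B (u θ) w, ν⟩ = 0` for all `w`. -/
theorem stmt1 (B : (ℝ × ℝ) →ₗ[ℝ] (ℝ × ℝ) →ₗ[ℝ] (ℝ × ℝ))
    (hB : ∀ u w : ℝ × ℝ, B u w = B w u) (θ : ℝ) :
    HasDerivAt (fun t : ℝ => B (cos t, sin t) (cos t, sin t))
      ((2 : ℝ) • B (cos θ, sin θ) (-sin θ, cos θ)) θ ∧
    ((¬ LinearIndependent ℝ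
        ![B (cos θ, sin θ) (cos θ, sin θ), (2 : ℝ) • B (cos θ, sin θ) (-sin θ, cos θ)]) ↔
      (∃ w : ℝ × ℝ, w ≠ 0 ∧ B (cos θ, sin θ) w = 0)) ∧
    ((∃ w : ℝ × ℝ, w ≠ 0 ∧ B (cos θ, sin θ) w = 0) ↔
      (∃ ν : ℝ × ℝ, ν ≠ 0 ∧ ∀ w : ℝ × ℝ,
        (B (cos θ, sin θ) w).1 * ν.1 + (B (cos θ, sin θ) w).2 * ν.2 = 0)) := by
  set T := B (cos θ, sin θ)
  have hker : (∃ w : ℝ × ℝ, w ≠ 0 ∧ T w = 0) ↔ ¬ Function.Injective T := by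
    rw [injective_iff_map_eq_zero]
    push Not
    simp only [and_comm]
  refine ⟨B.hasDerivAt_apply_self_of_symm hB ((hasDerivAt_cos θ).prodMk (hasDerivAt_sin θ)),
    ?_, ?_⟩
  · have hscale := LinearIndependent.pair_smul_smul_iff (x := T (cos θ, sin θ))
      (y := T (-sin θ, cos θ)) isUnit_one (two_ne_zero (α := ℝ)).isUnit
    rw [one_smul] at hscale
    rw [hker, hscale, ← (rotatedBasis θ).linearIndependent_comp_iff_injective, coe_rotatedBasis,
      ← FinVec.map_eq]
    rfl
  · rw [hker, LinearMap.injective_iff_surjective, T.not_surjective_iff_exists_orthogonal]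
end

section
/- Consider the curve η_p : ℝ → ℝ³ given by η_p(y) = 2(1, y, y²). Its image is contained in the affine plane Q = {(X,Y,Z) ∈ ℝ³ : X = 2}, its affine span equals Q, and the Euclidean distance from the origin to Q equals 2. In particular, Q differs from the plane {X + Z = 2}, and the distance 2 differs from the distance √2 from the origin to {X + Z = 2}. -/
/-- The curvature parabola of the tangential projection of the surface with 2-jet
`(x, y, x², 2xy, y²)` along the tangent direction `(0,1)`. -/
noncomputable def etaP : ℝ → EuclideanSpace ℝ (Fin 3) := fun y =>
  WithLp.toLp 2 ![2, 2 * y, 2 * y ^ 2]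

/-- The affine plane `X = 2` in `ℝ³`. -/
def Qplane : Set (EuclideanSpace ℝ (Fin 3)) := {v | v 0 = 2}

/-- The affine plane `X + Z = 2` in `ℝ³`. -/
def Pplane : Set (EuclideanSpace ℝ (Fin 3)) := {v | v 0 + v 2 = 2}

/-! The parabola lies in `{X = 2}`, and already its three points `η_p(0), η_p(1), η_p(-1)`
affinely span that plane. The distance from the origin to a coordinate hyperplane `{X = c}` is
`|c|`: a coordinate is bounded by the Euclidean norm, with equality at the foot point `c e₀`. -/

section CoordHyperplane

variable {ι : Type*}

def coordHyperplane (i : ι) (c : ℝ) : AffineSubspace ℝ (EuclideanSpace ℝ ι) where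
  carrier := {v | v i = c}
  smul_vsub_vadd_mem' t p₁ p₂ p₃ h₁ h₂ h₃ := by
    simp_all

@[simp]
theorem mem_coordHyperplane {i : ι} {c : ℝ} {v : EuclideanSpace ℝ ι} :
    v ∈ coordHyperplane i c ↔ v i = c :=
  Iff.rfl

theorem infDist_zero_coordHyperplane [Fintype ι] [DecidableEq ι] (i : ι) (c : ℝ) :
    Metric.infDist 0 (coordHyperplane i c : Set (EuclideanSpace ℝ ι)) = |c| := by
  have hfoot : EuclideanSpace.single i c ∈ coordHyperplane i c := by simp
  refine le_antisymm ?_ ((Metric.le_infDist ⟨_, hfoot⟩).2 fun v hv => ?_)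
  · simpa using Metric.infDist_le_dist_of_mem (x := 0) hfoot
  · rw [dist_zero_left, ← (mem_coordHyperplane.1 hv), ← Real.norm_eq_abs]
    exact PiLp.norm_apply_le v i

end CoordHyperplane

theorem Qplane_eq_coordHyperplane : Qplane = coordHyperplane (0 : Fin 3) 2 := rfl

theorem etaP_mem_Qplane (y : ℝ) : etaP y ∈ Qplane := by
  simp [etaP, Qplane]

theorem affineSpan_range_etaP_le :
    affineSpan ℝ (Set.range etaP) ≤ coordHyperplane (0 : Fin 3) 2 := by
  rw [affineSpan_le]
  rintro _ ⟨y, rfl⟩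
  exact etaP_mem_Qplane y

theorem Qplane_subset_affineSpan_range_etaP :
    Qplane ⊆ affineSpan ℝ (Set.range etaP) := by
  intro v hv
  set S := affineSpan ℝ (Set.range etaP)
  have hdir : ((v 1 + v 2) / 4) • (etaP 1 -ᵥ etaP 0) + ((v 2 - v 1) / 4) • (etaP (-1) -ᵥ etaP 0)
      ∈ S.direction := by
    rw [direction_affineSpan]
    exact add_mem (Submodule.smul_mem _ _ (vsub_mem_vectorSpan ℝ ⟨1, rfl⟩ ⟨0, rfl⟩))
      (Submodule.smul_mem _ _ (vsub_mem_vectorSpan ℝ ⟨-1, rfl⟩ ⟨0, rfl⟩))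
  have hv0 : v 0 = 2 := hv
  -- `(Y, Z) = a (2, 2) + b (-2, 2)` solved for `a, b`
  have hcomb : v = (((v 1 + v 2) / 4) • (etaP 1 -ᵥ etaP 0)
      + ((v 2 - v 1) / 4) • (etaP (-1) -ᵥ etaP 0)) +ᵥ etaP 0 := by
    ext i
    fin_cases i <;> simp [etaP, hv0] <;> ring
  rw [SetLike.mem_coe, hcomb]
  exact AffineSubspace.vadd_mem_of_mem_direction hdir (subset_affineSpan ℝ _ ⟨0, rfl⟩)

theorem Qplane_ne_Pplane : Qplane ≠ Pplane := by
  intro h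
  have hmem : WithLp.toLp 2 ![(2 : ℝ), 0, 1] ∈ Qplane := by simp [Qplane]
  rw [h] at hmem
  simp [Pplane] at hmem

/-- The image of `η_p(y) = 2(1, y, y²)` lies in the plane `X = 2`, its affine span is exactly
that plane, the distance from the origin to that plane is `2`; moreover `{X = 2}` differs
from `{X + Z = 2}` and `2 ≠ √2`. -/
theorem stmt3 :
    (∀ y : ℝ, etaP y ∈ Qplane) ∧
    ((affineSpan ℝ (Set.range etaP) : Set (EuclideanSpace ℝ (Fin 3))) = Qplane) ∧
    Metric.infDist 0 Qplane = 2 ∧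
    Qplane ≠ Pplane ∧
    (2 : ℝ) ≠ Real.sqrt 2 := by
  refine ⟨etaP_mem_Qplane, ?_, ?_, Qplane_ne_Pplane, ?_⟩
  · exact Set.Subset.antisymm affineSpan_range_etaP_le Qplane_subset_affineSpan_range_etaP
  · rw [Qplane_eq_coordHyperplane, infDist_zero_coordHyperplane, abs_two]
  · exact (Real.sqrt_lt_self_iff.2 one_lt_two).ne'
end

section
/- Let b₂₀, b₁₁, b₀₂, c₂₀ ∈ ℝ with b₀₂ > 0, let p, q, r : ℝ² → ℝ be smooth functions with vanishing 2-jet at the origin, and let f(x,y) = (x, xy + p(x,y), b₂₀x² + b₁₁xy + b₀₂y² + q(x,y), c₂₀x² + r(x,y)). For a = (0, v₂, v₃, v₄) ∈ ℝ⁴, the Hessian of the distance-squared function d_a at the origin is the zero matrix if and only if c₂₀ ≠ 0, v₂ = 0, v₃ = 0 and v₄ = 1/(2c₂₀). In particular, when c₂₀ ≠ 0 there is exactly one umbilical focus a = (0, 0, 0, 1/(2c₂₀)). -/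
/-- Partial derivative in the first variable of a function of two real variables. -/
noncomputable def pdx (g : ℝ → ℝ → ℝ) (x y : ℝ) : ℝ := deriv (fun t => g t y) x

/-- Partial derivative in the second variable of a function of two real variables. -/
noncomputable def pdy (g : ℝ → ℝ → ℝ) (x y : ℝ) : ℝ := deriv (fun t => g x t) y

/-- The Hessian matrix at the origin of a function of two real variables. -/
noncomputable def hessAt0 (g : ℝ → ℝ → ℝ) : Matrix (Fin 2) (Fin 2) ℝ :=
  !![pdx (pdx g) 0 0, pdy (pdx g) 0 0;
     pdx (pdy g) 0 0, pdy (pdy g) 0 0]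

/-- A function of two real variables has vanishing 2-jet at the origin: its value and all
first- and second-order partial derivatives vanish at `(0,0)`. -/
noncomputable def jet2ZeroAt0 (g : ℝ → ℝ → ℝ) : Prop :=
  g 0 0 = 0 ∧ pdx g 0 0 = 0 ∧ pdy g 0 0 = 0 ∧ hessAt0 g = 0

lemma hasDerivAt_slice1 {F : ℝ → ℝ → ℝ}
    (hF : ContDiff ℝ (⊤ : ℕ∞) (fun w : ℝ × ℝ => F w.1 w.2)) (x y : ℝ) :
    HasDerivAt (fun t => F t y) (pdx F x y) x := by
  have hdiff : DifferentiableAt ℝ (fun t => F t y) x := by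
    have h := (hF.differentiable (by simp) (x, y)).comp x
      ((differentiableAt_id (𝕜 := ℝ) (x := x)).prodMk (differentiableAt_const y))
    exact h
  exact hdiff.hasDerivAt

lemma hasDerivAt_slice2 {F : ℝ → ℝ → ℝ}
    (hF : ContDiff ℝ (⊤ : ℕ∞) (fun w : ℝ × ℝ => F w.1 w.2)) (x y : ℝ) :
    HasDerivAt (fun t => F x t) (pdy F x y) y := by
  have hdiff : DifferentiableAt ℝ (fun t => F x t) y :=
    (hF.differentiable (by simp) (x, y)).comp y
      ((differentiableAt_const x).prodMk differentiableAt_id)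
  exact hdiff.hasDerivAt

lemma contDiff_pdx {F : ℝ → ℝ → ℝ}
    (hF : ContDiff ℝ (⊤ : ℕ∞) (fun w : ℝ × ℝ => F w.1 w.2)) :
    ContDiff ℝ (⊤ : ℕ∞) (fun w : ℝ × ℝ => pdx F w.1 w.2) := by
  have key : ∀ x y : ℝ, pdx F x y = fderiv ℝ (fun w : ℝ × ℝ => F w.1 w.2) (x, y) (1, 0) := by
    intro x y
    have hc : HasDerivAt (fun t : ℝ => ((t, y) : ℝ × ℝ)) ((1 : ℝ), (0 : ℝ)) x :=
      (hasDerivAt_id x).prodMk (hasDerivAt_const x y)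
    have h2 : HasDerivAt (fun t => F t y)
        (fderiv ℝ (fun w : ℝ × ℝ => F w.1 w.2) (x, y) (1, 0)) x :=
      by have h := ((hF.differentiable (by simp) (x, y)).hasFDerivAt).comp_hasDerivAt x hc
         exact h
    rw [pdx]
    exact h2.deriv
  have : (fun w : ℝ × ℝ => pdx F w.1 w.2) =
      fun w => (fderiv ℝ (fun w : ℝ × ℝ => F w.1 w.2) w) (1, 0) := by
    funext w; exact key w.1 w.2
  rw [this]
  exact (ContinuousLinearMap.apply ℝ ℝ ((1 : ℝ), (0 : ℝ))).contDiff.comp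
    (hF.fderiv_right (by simp))

lemma contDiff_pdy {F : ℝ → ℝ → ℝ}
    (hF : ContDiff ℝ (⊤ : ℕ∞) (fun w : ℝ × ℝ => F w.1 w.2)) :
    ContDiff ℝ (⊤ : ℕ∞) (fun w : ℝ × ℝ => pdy F w.1 w.2) := by
  have key : ∀ x y : ℝ, pdy F x y = fderiv ℝ (fun w : ℝ × ℝ => F w.1 w.2) (x, y) (0, 1) := by
    intro x y
    have hc : HasDerivAt (fun t : ℝ => ((x, t) : ℝ × ℝ)) ((0 : ℝ), (1 : ℝ)) y :=
      (hasDerivAt_const y x).prodMk (hasDerivAt_id y)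
    have h2 : HasDerivAt (fun t => F x t)
        (fderiv ℝ (fun w : ℝ × ℝ => F w.1 w.2) (x, y) (0, 1)) y :=
      ((hF.differentiable (by simp) (x, y)).hasFDerivAt).comp_hasDerivAt y hc
    rw [pdy]
    exact h2.deriv
  have : (fun w : ℝ × ℝ => pdy F w.1 w.2) =
      fun w => (fderiv ℝ (fun w : ℝ × ℝ => F w.1 w.2) w) (0, 1) := by
    funext w; exact key w.1 w.2
  rw [this]
  exact (ContinuousLinearMap.apply ℝ ℝ ((0 : ℝ), (1 : ℝ))).contDiff.comp
    (hF.fderiv_right (by simp))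

lemma mat2_eq_zero {a b c d : ℝ} :
    (!![a, b; c, d] : Matrix (Fin 2) (Fin 2) ℝ) = 0 ↔ a = 0 ∧ b = 0 ∧ c = 0 ∧ d = 0 := by
  constructor
  · intro h
    have h00 := congrFun (congrFun h 0) 0
    have h01 := congrFun (congrFun h 0) 1
    have h10 := congrFun (congrFun h 1) 0
    have h11 := congrFun (congrFun h 1) 1
    simp at h00 h01 h10 h11
    exact ⟨h00, h01, h10, h11⟩
  · rintro ⟨rfl, rfl, rfl, rfl⟩
    ext i j
    fin_cases i <;> fin_cases j <;> simp

lemma hess_main (b₂₀ b₁₁ b₀₂ c₂₀ : ℝ) (p q r : ℝ → ℝ → ℝ)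
    (hp : ContDiff ℝ (⊤ : ℕ∞) (fun w : ℝ × ℝ => p w.1 w.2))
    (hq : ContDiff ℝ (⊤ : ℕ∞) (fun w : ℝ × ℝ => q w.1 w.2))
    (hr : ContDiff ℝ (⊤ : ℕ∞) (fun w : ℝ × ℝ => r w.1 w.2))
    (hpj : jet2ZeroAt0 p) (hqj : jet2ZeroAt0 q) (hrj : jet2ZeroAt0 r) (v₂ v₃ v₄ : ℝ) :
    hessAt0 (fun x y => x ^ 2 + (x * y + p x y - v₂) ^ 2
        + (b₂₀ * x ^ 2 + b₁₁ * x * y + b₀₂ * y ^ 2 + q x y - v₃) ^ 2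
        + (c₂₀ * x ^ 2 + r x y - v₄) ^ 2) =
      !![2 - 4 * b₂₀ * v₃ - 4 * c₂₀ * v₄, -(2 * v₂) - 2 * b₁₁ * v₃;
         -(2 * v₂) - 2 * b₁₁ * v₃, -(4 * b₀₂ * v₃)] := by
  obtain ⟨hp0, hpx0, hpy0, hpH⟩ := hpj
  obtain ⟨hq0, hqx0, hqy0, hqH⟩ := hqj
  obtain ⟨hr0, hrx0, hry0, hrH⟩ := hrj
  have hpxx : pdx (pdx p) 0 0 = 0 := by simpa [hessAt0] using congrFun (congrFun hpH 0) 0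
  have hpyx : pdy (pdx p) 0 0 = 0 := by simpa [hessAt0] using congrFun (congrFun hpH 0) 1
  have hpxy : pdx (pdy p) 0 0 = 0 := by simpa [hessAt0] using congrFun (congrFun hpH 1) 0
  have hpyy : pdy (pdy p) 0 0 = 0 := by simpa [hessAt0] using congrFun (congrFun hpH 1) 1
  have hqxx : pdx (pdx q) 0 0 = 0 := by simpa [hessAt0] using congrFun (congrFun hqH 0) 0
  have hqyx : pdy (pdx q) 0 0 = 0 := by simpa [hessAt0] using congrFun (congrFun hqH 0) 1
  have hqxy : pdx (pdy q) 0 0 = 0 := by simpa [hessAt0] using congrFun (congrFun hqH 1) 0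
  have hqyy : pdy (pdy q) 0 0 = 0 := by simpa [hessAt0] using congrFun (congrFun hqH 1) 1
  have hrxx : pdx (pdx r) 0 0 = 0 := by simpa [hessAt0] using congrFun (congrFun hrH 0) 0
  have hryx : pdy (pdx r) 0 0 = 0 := by simpa [hessAt0] using congrFun (congrFun hrH 0) 1
  have hrxy : pdx (pdy r) 0 0 = 0 := by simpa [hessAt0] using congrFun (congrFun hrH 1) 0
  have hryy : pdy (pdy r) 0 0 = 0 := by simpa [hessAt0] using congrFun (congrFun hrH 1) 1
  -- first partial derivatives as explicit functions
  have hpdx : pdx (fun x y => x ^ 2 + (x * y + p x y - v₂) ^ 2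
        + (b₂₀ * x ^ 2 + b₁₁ * x * y + b₀₂ * y ^ 2 + q x y - v₃) ^ 2
        + (c₂₀ * x ^ 2 + r x y - v₄) ^ 2) =
      fun x y => 2 * x + 2 * (x * y + p x y - v₂) * (y + pdx p x y)
        + 2 * (b₂₀ * x ^ 2 + b₁₁ * x * y + b₀₂ * y ^ 2 + q x y - v₃)
            * (2 * b₂₀ * x + b₁₁ * y + pdx q x y)
        + 2 * (c₂₀ * x ^ 2 + r x y - v₄) * (2 * c₂₀ * x + pdx r x y) := by
    funext x y
    have h1 : HasDerivAt (fun t : ℝ => t ^ 2 + (t * y + p t y - v₂) ^ 2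
        + (b₂₀ * t ^ 2 + b₁₁ * t * y + b₀₂ * y ^ 2 + q t y - v₃) ^ 2
        + (c₂₀ * t ^ 2 + r t y - v₄) ^ 2)
        (2 * x + 2 * (x * y + p x y - v₂) * (y + pdx p x y)
        + 2 * (b₂₀ * x ^ 2 + b₁₁ * x * y + b₀₂ * y ^ 2 + q x y - v₃)
            * (2 * b₂₀ * x + b₁₁ * y + pdx q x y)
        + 2 * (c₂₀ * x ^ 2 + r x y - v₄) * (2 * c₂₀ * x + pdx r x y)) x := by
      have hu2 : HasDerivAt (fun t => t * y + p t y - v₂) (1 * y + pdx p x y) x :=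
        (((hasDerivAt_id x).mul_const y).add (hasDerivAt_slice1 hp x y)).sub_const v₂
      have hu3 : HasDerivAt (fun t => b₂₀ * t ^ 2 + b₁₁ * t * y + b₀₂ * y ^ 2 + q t y - v₃)
          (b₂₀ * ((2 : ℕ) * x ^ (2 - 1)) + b₁₁ * 1 * y + 0 + pdx q x y) x :=
        (((((hasDerivAt_pow 2 x).const_mul b₂₀).add
            (((hasDerivAt_id x).const_mul b₁₁).mul_const y)).add
            (hasDerivAt_const x (b₀₂ * y ^ 2))).add (hasDerivAt_slice1 hq x y)).sub_const v₃
      have hu4 : HasDerivAt (fun t => c₂₀ * t ^ 2 + r t y - v₄)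
          (c₂₀ * ((2 : ℕ) * x ^ (2 - 1)) + pdx r x y) x :=
        (((hasDerivAt_pow 2 x).const_mul c₂₀).add (hasDerivAt_slice1 hr x y)).sub_const v₄
      have big := (((hasDerivAt_pow 2 x).add (hu2.pow (n := 2))).add
        (hu3.pow (n := 2))).add (hu4.pow (n := 2))
      refine big.congr_deriv ?_
      push_cast
      ring
    rw [pdx]
    exact h1.deriv
  have hpdy : pdy (fun x y => x ^ 2 + (x * y + p x y - v₂) ^ 2
        + (b₂₀ * x ^ 2 + b₁₁ * x * y + b₀₂ * y ^ 2 + q x y - v₃) ^ 2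
        + (c₂₀ * x ^ 2 + r x y - v₄) ^ 2) =
      fun x y => 2 * (x * y + p x y - v₂) * (x + pdy p x y)
        + 2 * (b₂₀ * x ^ 2 + b₁₁ * x * y + b₀₂ * y ^ 2 + q x y - v₃)
            * (b₁₁ * x + 2 * b₀₂ * y + pdy q x y)
        + 2 * (c₂₀ * x ^ 2 + r x y - v₄) * pdy r x y := by
    funext x y
    have h1 : HasDerivAt (fun t : ℝ => x ^ 2 + (x * t + p x t - v₂) ^ 2
        + (b₂₀ * x ^ 2 + b₁₁ * x * t + b₀₂ * t ^ 2 + q x t - v₃) ^ 2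
        + (c₂₀ * x ^ 2 + r x t - v₄) ^ 2)
        (2 * (x * y + p x y - v₂) * (x + pdy p x y)
        + 2 * (b₂₀ * x ^ 2 + b₁₁ * x * y + b₀₂ * y ^ 2 + q x y - v₃)
            * (b₁₁ * x + 2 * b₀₂ * y + pdy q x y)
        + 2 * (c₂₀ * x ^ 2 + r x y - v₄) * pdy r x y) y := by
      have hu2 : HasDerivAt (fun t => x * t + p x t - v₂) (x * 1 + pdy p x y) y :=
        ((((hasDerivAt_id y).const_mul x)).add (hasDerivAt_slice2 hp x y)).sub_const v₂
      have hu3 : HasDerivAt (fun t => b₂₀ * x ^ 2 + b₁₁ * x * t + b₀₂ * t ^ 2 + q x t - v₃)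
          (0 + b₁₁ * x * 1 + b₀₂ * ((2 : ℕ) * y ^ (2 - 1)) + pdy q x y) y :=
        ((((hasDerivAt_const y (b₂₀ * x ^ 2)).add
            ((hasDerivAt_id y).const_mul (b₁₁ * x))).add
            ((hasDerivAt_pow 2 y).const_mul b₀₂)).add (hasDerivAt_slice2 hq x y)).sub_const v₃
      have hu4 : HasDerivAt (fun t => c₂₀ * x ^ 2 + r x t - v₄) (0 + pdy r x y) y :=
        ((hasDerivAt_const y (c₂₀ * x ^ 2)).add (hasDerivAt_slice2 hr x y)).sub_const v₄
      have big := (((hasDerivAt_const y (x ^ 2)).add (hu2.pow (n := 2))).add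
        (hu3.pow (n := 2))).add (hu4.pow (n := 2))
      refine big.congr_deriv ?_
      push_cast
      ring
    rw [pdy]
    exact h1.deriv
  rw [hessAt0, hpdx, hpdy]
  -- entry (0,0)
  have e11 : pdx (fun x y => 2 * x + 2 * (x * y + p x y - v₂) * (y + pdx p x y)
        + 2 * (b₂₀ * x ^ 2 + b₁₁ * x * y + b₀₂ * y ^ 2 + q x y - v₃)
            * (2 * b₂₀ * x + b₁₁ * y + pdx q x y)
        + 2 * (c₂₀ * x ^ 2 + r x y - v₄) * (2 * c₂₀ * x + pdx r x y)) 0 0 =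
      2 - 4 * b₂₀ * v₃ - 4 * c₂₀ * v₄ := by
    have h1 : HasDerivAt (fun t : ℝ => 2 * t + 2 * (t * 0 + p t 0 - v₂) * (0 + pdx p t 0)
        + 2 * (b₂₀ * t ^ 2 + b₁₁ * t * 0 + b₀₂ * 0 ^ 2 + q t 0 - v₃)
            * (2 * b₂₀ * t + b₁₁ * 0 + pdx q t 0)
        + 2 * (c₂₀ * t ^ 2 + r t 0 - v₄) * (2 * c₂₀ * t + pdx r t 0))
        (2 - 4 * b₂₀ * v₃ - 4 * c₂₀ * v₄) 0 := by
      have hu2 : HasDerivAt (fun t => t * (0 : ℝ) + p t 0 - v₂) (1 * 0 + pdx p 0 0) 0 :=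
        (((hasDerivAt_id 0).mul_const 0).add (hasDerivAt_slice1 hp 0 0)).sub_const v₂
      have hw2 : HasDerivAt (fun t => (0 : ℝ) + pdx p t 0) (0 + pdx (pdx p) 0 0) 0 :=
        (hasDerivAt_const 0 0).add (hasDerivAt_slice1 (contDiff_pdx hp) 0 0)
      have hu3 : HasDerivAt
          (fun t => b₂₀ * t ^ 2 + b₁₁ * t * 0 + b₀₂ * (0 : ℝ) ^ 2 + q t 0 - v₃)
          (b₂₀ * ((2 : ℕ) * (0 : ℝ) ^ (2 - 1)) + b₁₁ * 1 * 0 + 0 + pdx q 0 0) 0 :=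
        (((((hasDerivAt_pow 2 0).const_mul b₂₀).add
            (((hasDerivAt_id 0).const_mul b₁₁).mul_const 0)).add
            (hasDerivAt_const 0 (b₀₂ * 0 ^ 2))).add (hasDerivAt_slice1 hq 0 0)).sub_const v₃
      have hw3 : HasDerivAt (fun t => 2 * b₂₀ * t + b₁₁ * (0 : ℝ) + pdx q t 0)
          (2 * b₂₀ * 1 + 0 + pdx (pdx q) 0 0) 0 :=
        (((hasDerivAt_id 0).const_mul (2 * b₂₀)).add (hasDerivAt_const 0 (b₁₁ * 0))).add
          (hasDerivAt_slice1 (contDiff_pdx hq) 0 0)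
      have hu4 : HasDerivAt (fun t => c₂₀ * t ^ 2 + r t 0 - v₄)
          (c₂₀ * ((2 : ℕ) * (0 : ℝ) ^ (2 - 1)) + pdx r 0 0) 0 :=
        (((hasDerivAt_pow 2 0).const_mul c₂₀).add (hasDerivAt_slice1 hr 0 0)).sub_const v₄
      have hw4 : HasDerivAt (fun t => 2 * c₂₀ * t + pdx r t 0)
          (2 * c₂₀ * 1 + pdx (pdx r) 0 0) 0 :=
        ((hasDerivAt_id 0).const_mul (2 * c₂₀)).add (hasDerivAt_slice1 (contDiff_pdx hr) 0 0)
      have big := ((((hasDerivAt_id (0 : ℝ)).const_mul 2).add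
        ((hu2.const_mul 2).mul hw2)).add ((hu3.const_mul 2).mul hw3)).add
        ((hu4.const_mul 2).mul hw4)
      refine big.congr_deriv ?_
      simp [hp0, hpx0, hpxx, hq0, hqx0, hqxx, hr0, hrx0, hrxx]
      ring
    rw [pdx]
    exact h1.deriv
  -- entry (0,1)
  have e12 : pdy (fun x y => 2 * x + 2 * (x * y + p x y - v₂) * (y + pdx p x y)
        + 2 * (b₂₀ * x ^ 2 + b₁₁ * x * y + b₀₂ * y ^ 2 + q x y - v₃)
            * (2 * b₂₀ * x + b₁₁ * y + pdx q x y)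
        + 2 * (c₂₀ * x ^ 2 + r x y - v₄) * (2 * c₂₀ * x + pdx r x y)) 0 0 =
      -(2 * v₂) - 2 * b₁₁ * v₃ := by
    have h1 : HasDerivAt (fun t : ℝ => 2 * 0 + 2 * (0 * t + p 0 t - v₂) * (t + pdx p 0 t)
        + 2 * (b₂₀ * 0 ^ 2 + b₁₁ * 0 * t + b₀₂ * t ^ 2 + q 0 t - v₃)
            * (2 * b₂₀ * 0 + b₁₁ * t + pdx q 0 t)
        + 2 * (c₂₀ * 0 ^ 2 + r 0 t - v₄) * (2 * c₂₀ * 0 + pdx r 0 t))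
        (-(2 * v₂) - 2 * b₁₁ * v₃) 0 := by
      have hu2 : HasDerivAt (fun t => (0 : ℝ) * t + p 0 t - v₂) (0 * 1 + pdy p 0 0) 0 :=
        (((hasDerivAt_id 0).const_mul 0).add (hasDerivAt_slice2 hp 0 0)).sub_const v₂
      have hw2 : HasDerivAt (fun t => t + pdx p 0 t) (1 + pdy (pdx p) 0 0) 0 :=
        (hasDerivAt_id 0).add (hasDerivAt_slice2 (contDiff_pdx hp) 0 0)
      have hu3 : HasDerivAt
          (fun t => b₂₀ * (0 : ℝ) ^ 2 + b₁₁ * 0 * t + b₀₂ * t ^ 2 + q 0 t - v₃)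
          (0 + b₁₁ * 0 * 1 + b₀₂ * ((2 : ℕ) * (0 : ℝ) ^ (2 - 1)) + pdy q 0 0) 0 :=
        ((((hasDerivAt_const 0 (b₂₀ * 0 ^ 2)).add
            ((hasDerivAt_id 0).const_mul (b₁₁ * 0))).add
            ((hasDerivAt_pow 2 0).const_mul b₀₂)).add (hasDerivAt_slice2 hq 0 0)).sub_const v₃
      have hw3 : HasDerivAt (fun t => 2 * b₂₀ * (0 : ℝ) + b₁₁ * t + pdx q 0 t)
          (0 + b₁₁ * 1 + pdy (pdx q) 0 0) 0 :=
        ((hasDerivAt_const 0 (2 * b₂₀ * 0)).add ((hasDerivAt_id 0).const_mul b₁₁)).add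
          (hasDerivAt_slice2 (contDiff_pdx hq) 0 0)
      have hu4 : HasDerivAt (fun t => c₂₀ * (0 : ℝ) ^ 2 + r 0 t - v₄) (0 + pdy r 0 0) 0 :=
        ((hasDerivAt_const 0 (c₂₀ * 0 ^ 2)).add (hasDerivAt_slice2 hr 0 0)).sub_const v₄
      have hw4 : HasDerivAt (fun t => 2 * c₂₀ * (0 : ℝ) + pdx r 0 t)
          (0 + pdy (pdx r) 0 0) 0 :=
        (hasDerivAt_const 0 (2 * c₂₀ * 0)).add (hasDerivAt_slice2 (contDiff_pdx hr) 0 0)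
      have big := (((hasDerivAt_const (0 : ℝ) (2 * (0 : ℝ))).add
        ((hu2.const_mul 2).mul hw2)).add ((hu3.const_mul 2).mul hw3)).add
        ((hu4.const_mul 2).mul hw4)
      refine big.congr_deriv ?_
      simp [hp0, hpy0, hpyx, hq0, hqy0, hqyx, hr0, hry0, hryx, hpx0, hqx0, hrx0]
      ring
    rw [pdy]
    exact h1.deriv
  -- entry (1,0)
  have e21 : pdx (fun x y => 2 * (x * y + p x y - v₂) * (x + pdy p x y)
        + 2 * (b₂₀ * x ^ 2 + b₁₁ * x * y + b₀₂ * y ^ 2 + q x y - v₃)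
            * (b₁₁ * x + 2 * b₀₂ * y + pdy q x y)
        + 2 * (c₂₀ * x ^ 2 + r x y - v₄) * pdy r x y) 0 0 =
      -(2 * v₂) - 2 * b₁₁ * v₃ := by
    have h1 : HasDerivAt (fun t : ℝ => 2 * (t * 0 + p t 0 - v₂) * (t + pdy p t 0)
        + 2 * (b₂₀ * t ^ 2 + b₁₁ * t * 0 + b₀₂ * 0 ^ 2 + q t 0 - v₃)
            * (b₁₁ * t + 2 * b₀₂ * 0 + pdy q t 0)
        + 2 * (c₂₀ * t ^ 2 + r t 0 - v₄) * pdy r t 0)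
        (-(2 * v₂) - 2 * b₁₁ * v₃) 0 := by
      have hu2 : HasDerivAt (fun t => t * (0 : ℝ) + p t 0 - v₂) (1 * 0 + pdx p 0 0) 0 :=
        (((hasDerivAt_id 0).mul_const 0).add (hasDerivAt_slice1 hp 0 0)).sub_const v₂
      have hw2 : HasDerivAt (fun t => t + pdy p t 0) (1 + pdx (pdy p) 0 0) 0 :=
        (hasDerivAt_id 0).add (hasDerivAt_slice1 (contDiff_pdy hp) 0 0)
      have hu3 : HasDerivAt
          (fun t => b₂₀ * t ^ 2 + b₁₁ * t * 0 + b₀₂ * (0 : ℝ) ^ 2 + q t 0 - v₃)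
          (b₂₀ * ((2 : ℕ) * (0 : ℝ) ^ (2 - 1)) + b₁₁ * 1 * 0 + 0 + pdx q 0 0) 0 :=
        (((((hasDerivAt_pow 2 0).const_mul b₂₀).add
            (((hasDerivAt_id 0).const_mul b₁₁).mul_const 0)).add
            (hasDerivAt_const 0 (b₀₂ * 0 ^ 2))).add (hasDerivAt_slice1 hq 0 0)).sub_const v₃
      have hw3 : HasDerivAt (fun t => b₁₁ * t + 2 * b₀₂ * (0 : ℝ) + pdy q t 0)
          (b₁₁ * 1 + 0 + pdx (pdy q) 0 0) 0 :=
        (((hasDerivAt_id 0).const_mul b₁₁).add (hasDerivAt_const 0 (2 * b₀₂ * 0))).add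
          (hasDerivAt_slice1 (contDiff_pdy hq) 0 0)
      have hu4 : HasDerivAt (fun t => c₂₀ * t ^ 2 + r t 0 - v₄)
          (c₂₀ * ((2 : ℕ) * (0 : ℝ) ^ (2 - 1)) + pdx r 0 0) 0 :=
        (((hasDerivAt_pow 2 0).const_mul c₂₀).add (hasDerivAt_slice1 hr 0 0)).sub_const v₄
      have hw4 : HasDerivAt (fun t => pdy r t 0) (pdx (pdy r) 0 0) 0 :=
        hasDerivAt_slice1 (contDiff_pdy hr) 0 0
      have big := (((hu2.const_mul 2).mul hw2).add ((hu3.const_mul 2).mul hw3)).add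
        ((hu4.const_mul 2).mul hw4)
      refine big.congr_deriv ?_
      simp [hp0, hpx0, hpxy, hq0, hqx0, hqxy, hr0, hrx0, hrxy, hpy0, hqy0, hry0]
      ring
    rw [pdx]
    exact h1.deriv
  -- entry (1,1)
  have e22 : pdy (fun x y => 2 * (x * y + p x y - v₂) * (x + pdy p x y)
        + 2 * (b₂₀ * x ^ 2 + b₁₁ * x * y + b₀₂ * y ^ 2 + q x y - v₃)
            * (b₁₁ * x + 2 * b₀₂ * y + pdy q x y)
        + 2 * (c₂₀ * x ^ 2 + r x y - v₄) * pdy r x y) 0 0 =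
      -(4 * b₀₂ * v₃) := by
    have h1 : HasDerivAt (fun t : ℝ => 2 * (0 * t + p 0 t - v₂) * (0 + pdy p 0 t)
        + 2 * (b₂₀ * 0 ^ 2 + b₁₁ * 0 * t + b₀₂ * t ^ 2 + q 0 t - v₃)
            * (b₁₁ * 0 + 2 * b₀₂ * t + pdy q 0 t)
        + 2 * (c₂₀ * 0 ^ 2 + r 0 t - v₄) * pdy r 0 t)
        (-(4 * b₀₂ * v₃)) 0 := by
      have hu2 : HasDerivAt (fun t => (0 : ℝ) * t + p 0 t - v₂) (0 * 1 + pdy p 0 0) 0 :=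
        (((hasDerivAt_id 0).const_mul 0).add (hasDerivAt_slice2 hp 0 0)).sub_const v₂
      have hw2 : HasDerivAt (fun t => (0 : ℝ) + pdy p 0 t) (0 + pdy (pdy p) 0 0) 0 :=
        (hasDerivAt_const 0 0).add (hasDerivAt_slice2 (contDiff_pdy hp) 0 0)
      have hu3 : HasDerivAt
          (fun t => b₂₀ * (0 : ℝ) ^ 2 + b₁₁ * 0 * t + b₀₂ * t ^ 2 + q 0 t - v₃)
          (0 + b₁₁ * 0 * 1 + b₀₂ * ((2 : ℕ) * (0 : ℝ) ^ (2 - 1)) + pdy q 0 0) 0 :=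
        ((((hasDerivAt_const 0 (b₂₀ * 0 ^ 2)).add
            ((hasDerivAt_id 0).const_mul (b₁₁ * 0))).add
            ((hasDerivAt_pow 2 0).const_mul b₀₂)).add (hasDerivAt_slice2 hq 0 0)).sub_const v₃
      have hw3 : HasDerivAt (fun t => b₁₁ * (0 : ℝ) + 2 * b₀₂ * t + pdy q 0 t)
          (0 + 2 * b₀₂ * 1 + pdy (pdy q) 0 0) 0 :=
        ((hasDerivAt_const 0 (b₁₁ * 0)).add ((hasDerivAt_id 0).const_mul (2 * b₀₂))).add
          (hasDerivAt_slice2 (contDiff_pdy hq) 0 0)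
      have hu4 : HasDerivAt (fun t => c₂₀ * (0 : ℝ) ^ 2 + r 0 t - v₄) (0 + pdy r 0 0) 0 :=
        ((hasDerivAt_const 0 (c₂₀ * 0 ^ 2)).add (hasDerivAt_slice2 hr 0 0)).sub_const v₄
      have hw4 : HasDerivAt (fun t => pdy r 0 t) (pdy (pdy r) 0 0) 0 :=
        hasDerivAt_slice2 (contDiff_pdy hr) 0 0
      have big := (((hu2.const_mul 2).mul hw2).add ((hu3.const_mul 2).mul hw3)).add
        ((hu4.const_mul 2).mul hw4)
      refine big.congr_deriv ?_
      simp [hp0, hpy0, hpyy, hq0, hqy0, hqyy, hr0, hry0, hryy, hpx0, hqx0, hrx0]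
      ring
    rw [pdy]
    exact h1.deriv
  rw [e11, e12, e21, e22]

/-- For the normal form `f(x,y) = (x, xy + p, b₂₀x² + b₁₁xy + b₀₂y² + q, c₂₀x² + r)` of a
corank-1 surface in `ℝ⁴` whose curvature parabola is a non-degenerate parabola, and
`a = (0, v₂, v₃, v₄)`, the Hessian of `d_a = ‖f − a‖²` at the origin vanishes iff
`c₂₀ ≠ 0`, `v₂ = 0`, `v₃ = 0` and `v₄ = 1/(2c₂₀)`; in particular when `c₂₀ ≠ 0` there is
exactly one umbilical focus. -/
theorem stmt6 (b₂₀ b₁₁ b₀₂ c₂₀ : ℝ) (hb₀₂ : b₀₂ > 0) (p q r : ℝ → ℝ → ℝ)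
    (hp : ContDiff ℝ (⊤ : ℕ∞) (fun w : ℝ × ℝ => p w.1 w.2))
    (hq : ContDiff ℝ (⊤ : ℕ∞) (fun w : ℝ × ℝ => q w.1 w.2))
    (hr : ContDiff ℝ (⊤ : ℕ∞) (fun w : ℝ × ℝ => r w.1 w.2))
    (hpj : jet2ZeroAt0 p) (hqj : jet2ZeroAt0 q) (hrj : jet2ZeroAt0 r) :
    (∀ v₂ v₃ v₄ : ℝ,
      hessAt0 (fun x y => x ^ 2 + (x * y + p x y - v₂) ^ 2
        + (b₂₀ * x ^ 2 + b₁₁ * x * y + b₀₂ * y ^ 2 + q x y - v₃) ^ 2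
        + (c₂₀ * x ^ 2 + r x y - v₄) ^ 2) = 0 ↔
      (c₂₀ ≠ 0 ∧ v₂ = 0 ∧ v₃ = 0 ∧ v₄ = 1 / (2 * c₂₀))) ∧
    (c₂₀ ≠ 0 → ∃! w : ℝ × ℝ × ℝ,
      hessAt0 (fun x y => x ^ 2 + (x * y + p x y - w.1) ^ 2
        + (b₂₀ * x ^ 2 + b₁₁ * x * y + b₀₂ * y ^ 2 + q x y - w.2.1) ^ 2
        + (c₂₀ * x ^ 2 + r x y - w.2.2) ^ 2) = 0) := by
  have hiff : ∀ v₂ v₃ v₄ : ℝ,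
      hessAt0 (fun x y => x ^ 2 + (x * y + p x y - v₂) ^ 2
        + (b₂₀ * x ^ 2 + b₁₁ * x * y + b₀₂ * y ^ 2 + q x y - v₃) ^ 2
        + (c₂₀ * x ^ 2 + r x y - v₄) ^ 2) = 0 ↔
      (c₂₀ ≠ 0 ∧ v₂ = 0 ∧ v₃ = 0 ∧ v₄ = 1 / (2 * c₂₀)) := by
    intro v₂ v₃ v₄
    rw [hess_main b₂₀ b₁₁ b₀₂ c₂₀ p q r hp hq hr hpj hqj hrj v₂ v₃ v₄, mat2_eq_zero]
    constructor
    · rintro ⟨h1, h2, h3, h4⟩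
      have hb : b₀₂ ≠ 0 := ne_of_gt hb₀₂
      have hv3 : v₃ = 0 := by
        rcases mul_eq_zero.1 (show (4 * b₀₂) * v₃ = 0 by linarith) with h | h
        · exfalso; rcases mul_eq_zero.1 h with h' | h' <;> [norm_num at h'; exact hb h']
        · exact h
      subst hv3
      have hv2 : v₂ = 0 := by linarith
      have hc : c₂₀ ≠ 0 := by
        intro h; rw [h] at h1; norm_num at h1
      refine ⟨hc, hv2, rfl, ?_⟩
      field_simp
      linarith
    · rintro ⟨hc, rfl, rfl, rfl⟩
      refine ⟨?_, by ring, by ring, by ring⟩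
      field_simp
      ring
  refine ⟨hiff, fun hc => ?_⟩
  refine ⟨(0, 0, 1 / (2 * c₂₀)), ?_, ?_⟩
  · exact (hiff 0 0 (1 / (2 * c₂₀))).2 ⟨hc, rfl, rfl, rfl⟩
  · rintro ⟨w₁, w₂, w₃⟩ hw
    obtain ⟨-, h2, h3, h4⟩ := (hiff w₁ w₂ w₃).1 hw
    simp [h2, h3, h4]
end

section
/- Let b₂₀ ∈ ℝ, let p, q, r : ℝ² → ℝ be smooth functions with vanishing 2-jet at the origin, and let f(x,y) = (x, xy + p(x,y), b₂₀x² + q(x,y), r(x,y)). For a = (0, v₂, v₃, v₄) ∈ ℝ⁴, the Hessian of d_a at the origin equals [[2 − 4b₂₀v₃, −2v₂], [−2v₂, 0]]; it is degenerate if and only if v₂ = 0 (so the focal set at the origin is the plane {v₂ = 0}), and it is the zero matrix if and only if v₂ = 0 and 2b₂₀v₃ = 1. In particular, when b₂₀ ≠ 0 the set of umbilical foci is the line {(0, 0, 1/(2b₂₀), t) : t ∈ ℝ}. -/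
lemma sliceX {g : ℝ → ℝ → ℝ} (hg : ContDiff ℝ (⊤ : ℕ∞) (fun w : ℝ × ℝ => g w.1 w.2)) (x y : ℝ) :
    HasDerivAt (fun t => g t y) (pdx g x y) x := by
  have hd : DifferentiableAt ℝ (fun t => g t y) x :=
    ((hg.differentiable (by simp)).comp (differentiable_id.prodMk (differentiable_const y))) x
  exact hd.hasDerivAt

lemma sliceY {g : ℝ → ℝ → ℝ} (hg : ContDiff ℝ (⊤ : ℕ∞) (fun w : ℝ × ℝ => g w.1 w.2)) (x y : ℝ) :
    HasDerivAt (fun t => g x t) (pdy g x y) y := by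
  have hd : DifferentiableAt ℝ (fun t => g x t) y :=
    ((hg.differentiable (by simp)).comp ((differentiable_const x).prodMk differentiable_id)) y
  exact hd.hasDerivAt

lemma pdx_smooth {g : ℝ → ℝ → ℝ} (hg : ContDiff ℝ (⊤ : ℕ∞) (fun w : ℝ × ℝ => g w.1 w.2)) :
    ContDiff ℝ (⊤ : ℕ∞) (fun w : ℝ × ℝ => pdx g w.1 w.2) := by
  have h1 : (fun w : ℝ × ℝ => pdx g w.1 w.2)
      = fun w => fderiv ℝ (fun w : ℝ × ℝ => g w.1 w.2) w (1, 0) := by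
    funext w
    obtain ⟨x, y⟩ := w
    have hc : HasDerivAt (fun t => g t y) (fderiv ℝ (fun w : ℝ × ℝ => g w.1 w.2) (x, y) (1, 0)) x := by
      have := ((hg.differentiable (by simp) (x, y)).hasFDerivAt).comp_hasDerivAt x
        ((hasDerivAt_id x).prodMk (hasDerivAt_const x y))
      exact this
    exact hc.deriv
  rw [h1]
  exact (hg.fderiv_right (by simp)).clm_apply contDiff_const

lemma pdy_smooth {g : ℝ → ℝ → ℝ} (hg : ContDiff ℝ (⊤ : ℕ∞) (fun w : ℝ × ℝ => g w.1 w.2)) :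
    ContDiff ℝ (⊤ : ℕ∞) (fun w : ℝ × ℝ => pdy g w.1 w.2) := by
  have h1 : (fun w : ℝ × ℝ => pdy g w.1 w.2)
      = fun w => fderiv ℝ (fun w : ℝ × ℝ => g w.1 w.2) w (0, 1) := by
    funext w
    obtain ⟨x, y⟩ := w
    have hc : HasDerivAt (fun t => g x t) (fderiv ℝ (fun w : ℝ × ℝ => g w.1 w.2) (x, y) (0, 1)) y := by
      have := ((hg.differentiable (by simp) (x, y)).hasFDerivAt).comp_hasDerivAt y
        ((hasDerivAt_const y x).prodMk (hasDerivAt_id y))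
      exact this
    exact hc.deriv
  rw [h1]
  exact (hg.fderiv_right (by simp)).clm_apply contDiff_const

lemma jet2_entries {g : ℝ → ℝ → ℝ} (h : jet2ZeroAt0 g) :
    g 0 0 = 0 ∧ pdx g 0 0 = 0 ∧ pdy g 0 0 = 0 ∧ pdx (pdx g) 0 0 = 0 ∧
      pdy (pdx g) 0 0 = 0 ∧ pdx (pdy g) 0 0 = 0 ∧ pdy (pdy g) 0 0 = 0 := by
  obtain ⟨h0, h1, h2, h3⟩ := h
  rw [hessAt0, ← Matrix.ext_iff] at h3
  exact ⟨h0, h1, h2, by simpa using h3 0 0, by simpa using h3 0 1,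
    by simpa using h3 1 0, by simpa using h3 1 1⟩

section key
variable (b₂₀ v₂ v₃ v₄ : ℝ) (p q r : ℝ → ℝ → ℝ)
    (hp : ContDiff ℝ (⊤ : ℕ∞) (fun w : ℝ × ℝ => p w.1 w.2))
    (hq : ContDiff ℝ (⊤ : ℕ∞) (fun w : ℝ × ℝ => q w.1 w.2))
    (hr : ContDiff ℝ (⊤ : ℕ∞) (fun w : ℝ × ℝ => r w.1 w.2))
include hp hq hr

lemma pdxG (x y : ℝ) :
    pdx (fun x y => x ^ 2 + (x * y + p x y - v₂) ^ 2
        + (b₂₀ * x ^ 2 + q x y - v₃) ^ 2 + (r x y - v₄) ^ 2) x y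
    = 2 * x + 2 * (x * y + p x y - v₂) * (y + pdx p x y)
      + 2 * (b₂₀ * x ^ 2 + q x y - v₃) * (2 * b₂₀ * x + pdx q x y)
      + 2 * (r x y - v₄) * (pdx r x y) := by
  have h : HasDerivAt (fun t => t ^ 2 + (t * y + p t y - v₂) ^ 2
        + (b₂₀ * t ^ 2 + q t y - v₃) ^ 2 + (r t y - v₄) ^ 2)
      (2 * x + 2 * (x * y + p x y - v₂) * (y + pdx p x y)
      + 2 * (b₂₀ * x ^ 2 + q x y - v₃) * (2 * b₂₀ * x + pdx q x y)
      + 2 * (r x y - v₄) * (pdx r x y)) x := by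
    have h1 := (hasDerivAt_pow 2 x)
    have h2 := ((((hasDerivAt_id x).mul_const y).add (sliceX hp x y)).sub_const v₂).pow 2
    have h3 := ((((hasDerivAt_pow 2 x).const_mul b₂₀).add (sliceX hq x y)).sub_const v₃).pow 2
    have h4 := ((sliceX hr x y).sub_const v₄).pow 2
    have := ((h1.add h2).add h3).add h4
    refine this.congr_deriv ?_
    simp only [id_eq, Pi.add_apply]
    push_cast
    ring
  exact h.deriv

lemma pdyG (x y : ℝ) :
    pdy (fun x y => x ^ 2 + (x * y + p x y - v₂) ^ 2
        + (b₂₀ * x ^ 2 + q x y - v₃) ^ 2 + (r x y - v₄) ^ 2) x y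
    = 2 * (x * y + p x y - v₂) * (x + pdy p x y)
      + 2 * (b₂₀ * x ^ 2 + q x y - v₃) * (pdy q x y)
      + 2 * (r x y - v₄) * (pdy r x y) := by
  have h : HasDerivAt (fun t => x ^ 2 + (x * t + p x t - v₂) ^ 2
        + (b₂₀ * x ^ 2 + q x t - v₃) ^ 2 + (r x t - v₄) ^ 2)
      (2 * (x * y + p x y - v₂) * (x + pdy p x y)
      + 2 * (b₂₀ * x ^ 2 + q x y - v₃) * (pdy q x y)
      + 2 * (r x y - v₄) * (pdy r x y)) y := by
    have h1 := hasDerivAt_const y (x ^ 2)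
    have h2 := ((((hasDerivAt_id y).const_mul x).add (sliceY hp x y)).sub_const v₂).pow 2
    have h3 := (((hasDerivAt_const y (b₂₀ * x ^ 2)).add (sliceY hq x y)).sub_const v₃).pow 2
    have h4 := ((sliceY hr x y).sub_const v₄).pow 2
    have := ((h1.add h2).add h3).add h4
    refine this.congr_deriv ?_
    simp only [id_eq, Pi.add_apply]
    push_cast
    ring
  exact h.deriv

variable (hpj : jet2ZeroAt0 p) (hqj : jet2ZeroAt0 q) (hrj : jet2ZeroAt0 r)
include hpj hqj hrj

lemma hessKey :
    hessAt0 (fun x y => x ^ 2 + (x * y + p x y - v₂) ^ 2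
        + (b₂₀ * x ^ 2 + q x y - v₃) ^ 2 + (r x y - v₄) ^ 2)
    = !![2 - 4 * b₂₀ * v₃, -2 * v₂; -2 * v₂, 0] := by
  obtain ⟨p0, px, py, pxx, pyx, pxy, pyy⟩ := jet2_entries hpj
  obtain ⟨q0, qx, qy, qxx, qyx, qxy, qyy⟩ := jet2_entries hqj
  obtain ⟨r0, rx, ry, rxx, ryx, rxy, ryy⟩ := jet2_entries hrj
  set G : ℝ → ℝ → ℝ := fun x y => x ^ 2 + (x * y + p x y - v₂) ^ 2
        + (b₂₀ * x ^ 2 + q x y - v₃) ^ 2 + (r x y - v₄) ^ 2 with hG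
  have e00 : pdx (pdx G) 0 0 = 2 - 4 * b₂₀ * v₃ := by
    have hd : HasDerivAt (fun t => 2 * t + 2 * (t * 0 + p t 0 - v₂) * (0 + pdx p t 0)
        + 2 * (b₂₀ * t ^ 2 + q t 0 - v₃) * (2 * b₂₀ * t + pdx q t 0)
        + 2 * (r t 0 - v₄) * (pdx r t 0)) (2 - 4 * b₂₀ * v₃) 0 := by
      have h1 : HasDerivAt (fun t : ℝ => 2 * t) 2 (0:ℝ) := by
        simpa using (hasDerivAt_id (0:ℝ)).const_mul 2
      have h2 := (((((hasDerivAt_id (0:ℝ)).mul_const 0).add (sliceX hp 0 0)).sub_const v₂).const_mul 2).mul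
        ((hasDerivAt_const (0:ℝ) (0:ℝ)).add (sliceX (pdx_smooth hp) 0 0))
      have h3 := (((((hasDerivAt_pow 2 (0:ℝ)).const_mul b₂₀).add (sliceX hq 0 0)).sub_const v₃).const_mul 2).mul
        (((hasDerivAt_id (0:ℝ)).const_mul (2 * b₂₀)).add (sliceX (pdx_smooth hq) 0 0))
      have h4 := (((sliceX hr 0 0).sub_const v₄).const_mul 2).mul (sliceX (pdx_smooth hr) 0 0)
      have := ((h1.add h2).add h3).add h4
      refine this.congr_deriv ?_
      simp only [id_eq, Pi.add_apply, p0, px, pxx, q0, qx, qxx, r0, rx, rxx]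
      push_cast
      ring
    have hrw : (fun t => pdx G t 0) = (fun t => 2 * t + 2 * (t * 0 + p t 0 - v₂) * (0 + pdx p t 0)
        + 2 * (b₂₀ * t ^ 2 + q t 0 - v₃) * (2 * b₂₀ * t + pdx q t 0)
        + 2 * (r t 0 - v₄) * (pdx r t 0)) :=
      funext fun t => pdxG b₂₀ v₂ v₃ v₄ p q r hp hq hr t 0
    show deriv (fun t => pdx G t 0) 0 = _
    rw [hrw]
    exact hd.deriv
  have e01 : pdy (pdx G) 0 0 = -2 * v₂ := by
    have hd : HasDerivAt (fun s => 2 * (0:ℝ) + 2 * (0 * s + p 0 s - v₂) * (s + pdx p 0 s)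
        + 2 * (b₂₀ * 0 ^ 2 + q 0 s - v₃) * (2 * b₂₀ * 0 + pdx q 0 s)
        + 2 * (r 0 s - v₄) * (pdx r 0 s)) (-2 * v₂) 0 := by
      have h1 : HasDerivAt (fun _ : ℝ => 2 * (0:ℝ)) 0 (0:ℝ) := hasDerivAt_const _ _
      have h2 := (((((hasDerivAt_id (0:ℝ)).const_mul 0).add (sliceY hp 0 0)).sub_const v₂).const_mul 2).mul
        ((hasDerivAt_id (0:ℝ)).add (sliceY (pdx_smooth hp) 0 0))
      have h3 := ((((hasDerivAt_const (0:ℝ) (b₂₀ * 0 ^ 2)).add (sliceY hq 0 0)).sub_const v₃).const_mul 2).mul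
        ((hasDerivAt_const (0:ℝ) (2 * b₂₀ * 0)).add (sliceY (pdx_smooth hq) 0 0))
      have h4 := (((sliceY hr 0 0).sub_const v₄).const_mul 2).mul (sliceY (pdx_smooth hr) 0 0)
      have := ((h1.add h2).add h3).add h4
      refine this.congr_deriv ?_
      simp only [id_eq, Pi.add_apply, p0, py, pyx, q0, qy, qyx, r0, ry, ryx]
      ring
    have hrw : (fun s => pdx G 0 s) = (fun s => 2 * (0:ℝ) + 2 * (0 * s + p 0 s - v₂) * (s + pdx p 0 s)
        + 2 * (b₂₀ * 0 ^ 2 + q 0 s - v₃) * (2 * b₂₀ * 0 + pdx q 0 s)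
        + 2 * (r 0 s - v₄) * (pdx r 0 s)) :=
      funext fun s => pdxG b₂₀ v₂ v₃ v₄ p q r hp hq hr 0 s
    show deriv (fun s => pdx G 0 s) 0 = _
    rw [hrw]
    exact hd.deriv
  have e10 : pdx (pdy G) 0 0 = -2 * v₂ := by
    have hd : HasDerivAt (fun t => 2 * (t * 0 + p t 0 - v₂) * (t + pdy p t 0)
        + 2 * (b₂₀ * t ^ 2 + q t 0 - v₃) * (pdy q t 0)
        + 2 * (r t 0 - v₄) * (pdy r t 0)) (-2 * v₂) 0 := by
      have h2 := (((((hasDerivAt_id (0:ℝ)).mul_const 0).add (sliceX hp 0 0)).sub_const v₂).const_mul 2).mul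
        ((hasDerivAt_id (0:ℝ)).add (sliceX (pdy_smooth hp) 0 0))
      have h3 := (((((hasDerivAt_pow 2 (0:ℝ)).const_mul b₂₀).add (sliceX hq 0 0)).sub_const v₃).const_mul 2).mul
        (sliceX (pdy_smooth hq) 0 0)
      have h4 := (((sliceX hr 0 0).sub_const v₄).const_mul 2).mul (sliceX (pdy_smooth hr) 0 0)
      have := (h2.add h3).add h4
      refine this.congr_deriv ?_
      simp only [id_eq, Pi.add_apply, p0, px, pxy, q0, qx, qxy, r0, rx, rxy]
      push_cast
      ring
    have hrw : (fun t => pdy G t 0) = (fun t => 2 * (t * 0 + p t 0 - v₂) * (t + pdy p t 0)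
        + 2 * (b₂₀ * t ^ 2 + q t 0 - v₃) * (pdy q t 0)
        + 2 * (r t 0 - v₄) * (pdy r t 0)) :=
      funext fun t => pdyG b₂₀ v₂ v₃ v₄ p q r hp hq hr t 0
    show deriv (fun t => pdy G t 0) 0 = _
    rw [hrw]
    exact hd.deriv
  have e11 : pdy (pdy G) 0 0 = 0 := by
    have hd : HasDerivAt (fun s => 2 * ((0:ℝ) * s + p 0 s - v₂) * (0 + pdy p 0 s)
        + 2 * (b₂₀ * 0 ^ 2 + q 0 s - v₃) * (pdy q 0 s)
        + 2 * (r 0 s - v₄) * (pdy r 0 s)) 0 0 := by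
      have h2 := (((((hasDerivAt_id (0:ℝ)).const_mul 0).add (sliceY hp 0 0)).sub_const v₂).const_mul 2).mul
        ((hasDerivAt_const (0:ℝ) (0:ℝ)).add (sliceY (pdy_smooth hp) 0 0))
      have h3 := ((((hasDerivAt_const (0:ℝ) (b₂₀ * 0 ^ 2)).add (sliceY hq 0 0)).sub_const v₃).const_mul 2).mul
        (sliceY (pdy_smooth hq) 0 0)
      have h4 := (((sliceY hr 0 0).sub_const v₄).const_mul 2).mul (sliceY (pdy_smooth hr) 0 0)
      have := (h2.add h3).add h4
      refine this.congr_deriv ?_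
      simp only [id_eq, Pi.add_apply, p0, py, pyy, q0, qy, qyy, r0, ry, ryy]
      ring
    have hrw : (fun s => pdy G 0 s) = (fun s => 2 * ((0:ℝ) * s + p 0 s - v₂) * (0 + pdy p 0 s)
        + 2 * (b₂₀ * 0 ^ 2 + q 0 s - v₃) * (pdy q 0 s)
        + 2 * (r 0 s - v₄) * (pdy r 0 s)) :=
      funext fun s => pdyG b₂₀ v₂ v₃ v₄ p q r hp hq hr 0 s
    show deriv (fun s => pdy G 0 s) 0 = _
    rw [hrw]
    exact hd.deriv
  rw [hessAt0, e00, e01, e10, e11]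

end key

lemma matzero (A B : ℝ) : (!![A, B; B, 0] : Matrix (Fin 2) (Fin 2) ℝ) = 0 ↔ A = 0 ∧ B = 0 := by
  rw [← Matrix.ext_iff]
  constructor
  · intro h; exact ⟨by simpa using h 0 0, by simpa using h 0 1⟩
  · rintro ⟨h1, h2⟩ i j; fin_cases i <;> fin_cases j <;> simp [h1, h2]

/-- For the normal form `f(x,y) = (x, xy + p, b₂₀x² + q, r)` (curvature parabola a line)
and `a = (0, v₂, v₃, v₄)`, the Hessian of `d_a` at the origin equals
`[[2 − 4b₂₀v₃, −2v₂], [−2v₂, 0]]`; it is degenerate iff `v₂ = 0`, and zero iff `v₂ = 0` and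
`2b₂₀v₃ = 1`; when `b₂₀ ≠ 0` the umbilical foci form the line `{(0,0,1/(2b₂₀),t)}`. -/
theorem stmt11 (b₂₀ : ℝ) (p q r : ℝ → ℝ → ℝ)
    (hp : ContDiff ℝ (⊤ : ℕ∞) (fun w : ℝ × ℝ => p w.1 w.2))
    (hq : ContDiff ℝ (⊤ : ℕ∞) (fun w : ℝ × ℝ => q w.1 w.2))
    (hr : ContDiff ℝ (⊤ : ℕ∞) (fun w : ℝ × ℝ => r w.1 w.2))
    (hpj : jet2ZeroAt0 p) (hqj : jet2ZeroAt0 q) (hrj : jet2ZeroAt0 r) :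
    (∀ v₂ v₃ v₄ : ℝ,
      hessAt0 (fun x y => x ^ 2 + (x * y + p x y - v₂) ^ 2
        + (b₂₀ * x ^ 2 + q x y - v₃) ^ 2 + (r x y - v₄) ^ 2)
        = !![2 - 4 * b₂₀ * v₃, -2 * v₂; -2 * v₂, 0] ∧
      ((hessAt0 (fun x y => x ^ 2 + (x * y + p x y - v₂) ^ 2
        + (b₂₀ * x ^ 2 + q x y - v₃) ^ 2 + (r x y - v₄) ^ 2)).det = 0 ↔ v₂ = 0) ∧
      (hessAt0 (fun x y => x ^ 2 + (x * y + p x y - v₂) ^ 2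
        + (b₂₀ * x ^ 2 + q x y - v₃) ^ 2 + (r x y - v₄) ^ 2) = 0 ↔
        (v₂ = 0 ∧ 2 * b₂₀ * v₃ = 1))) ∧
    (b₂₀ ≠ 0 →
      {w : ℝ × ℝ × ℝ |
        hessAt0 (fun x y => x ^ 2 + (x * y + p x y - w.1) ^ 2
          + (b₂₀ * x ^ 2 + q x y - w.2.1) ^ 2 + (r x y - w.2.2) ^ 2) = 0}
      = {w : ℝ × ℝ × ℝ | w.1 = 0 ∧ w.2.1 = 1 / (2 * b₂₀)}) := by
  have key : ∀ v₂ v₃ v₄ : ℝ,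
      hessAt0 (fun x y => x ^ 2 + (x * y + p x y - v₂) ^ 2
        + (b₂₀ * x ^ 2 + q x y - v₃) ^ 2 + (r x y - v₄) ^ 2)
        = !![2 - 4 * b₂₀ * v₃, -2 * v₂; -2 * v₂, 0] :=
    fun v₂ v₃ v₄ => hessKey b₂₀ v₂ v₃ v₄ p q r hp hq hr hpj hqj hrj
  constructor
  · intro v₂ v₃ v₄
    refine ⟨key v₂ v₃ v₄, ?_, ?_⟩
    · rw [key v₂ v₃ v₄, Matrix.det_fin_two_of]
      constructor
      · intro h; nlinarith [sq_nonneg v₂]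
      · intro h; rw [h]; ring
    · rw [key v₂ v₃ v₄, matzero]
      constructor
      · rintro ⟨h1, h2⟩; constructor <;> linarith
      · rintro ⟨h1, h2⟩; constructor <;> linarith
  · intro hb
    ext ⟨w1, w2, w3⟩
    simp only [Set.mem_setOf_eq]
    rw [key w1 w2 w3, matzero]
    have h2b : (2 : ℝ) * b₂₀ ≠ 0 := mul_ne_zero two_ne_zero hb
    constructor
    · rintro ⟨h1, h2⟩
      refine ⟨by linarith, ?_⟩
      rw [eq_div_iff h2b]
      linarith
    · rintro ⟨h1, h2⟩
      rw [eq_div_iff h2b] at h2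
      exact ⟨by linarith, by linarith⟩
end

section
/- Let b₂₀ ∈ ℝ with b₂₀ ≠ 0, let p, q, r : ℝ² → ℝ be smooth functions with vanishing 2-jet at the origin, and let f(x,y) = (x, p(x,y), b₂₀x² + q(x,y), r(x,y)). For a = (0, v₂, v₃, v₄) ∈ ℝ⁴, the Hessian of d_a at the origin equals [[2 − 4b₂₀v₃, 0], [0, 0]]; hence it is degenerate for every such a (the focal set at the origin is the whole normal 3-space {0} × ℝ³), and it is the zero matrix if and only if v₃ = 1/(2b₂₀). In particular the set of umbilical foci is the plane {(0, t, 1/(2b₂₀), s) : t, s ∈ ℝ}. -/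


lemma hd_fst (g : ℝ → ℝ → ℝ) (hg : ContDiff ℝ (⊤ : ℕ∞) (fun w : ℝ × ℝ => g w.1 w.2)) (x y : ℝ) :
    HasDerivAt (fun t => g t y) (pdx g x y) x := by
  have hdiff : DifferentiableAt ℝ (fun t => g t y) x := by
    exact ((hg.differentiable (by simp)).comp
      ((differentiable_id (𝕜 := ℝ)).prodMk (differentiable_const y))).differentiableAt
  simpa [pdx] using hdiff.hasDerivAt

lemma hd_snd (g : ℝ → ℝ → ℝ) (hg : ContDiff ℝ (⊤ : ℕ∞) (fun w : ℝ × ℝ => g w.1 w.2)) (x y : ℝ) :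
    HasDerivAt (fun s => g x s) (pdy g x y) y := by
  have hdiff : DifferentiableAt ℝ (fun s => g x s) y := by
    exact ((hg.differentiable (by simp)).comp
      ((differentiable_const (𝕜 := ℝ) x).prodMk differentiable_id)).differentiableAt
  simpa [pdy] using hdiff.hasDerivAt

lemma pdx_eq_fderiv (g : ℝ → ℝ → ℝ) (hg : ContDiff ℝ (⊤ : ℕ∞) (fun w : ℝ × ℝ => g w.1 w.2)) (x y : ℝ) :
    pdx g x y = fderiv ℝ (fun w : ℝ × ℝ => g w.1 w.2) (x, y) (1, 0) := by
  have h1 : HasDerivAt (fun t : ℝ => (t, y)) ((1 : ℝ), (0 : ℝ)) x :=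
    (hasDerivAt_id x).prodMk (hasDerivAt_const x y)
  have h2 := (((hg.differentiable (by simp)) (x, y)).hasFDerivAt).comp_hasDerivAt x h1
  simpa [pdx, Function.comp_def] using h2.deriv

lemma pdy_eq_fderiv (g : ℝ → ℝ → ℝ) (hg : ContDiff ℝ (⊤ : ℕ∞) (fun w : ℝ × ℝ => g w.1 w.2)) (x y : ℝ) :
    pdy g x y = fderiv ℝ (fun w : ℝ × ℝ => g w.1 w.2) (x, y) (0, 1) := by
  have h1 : HasDerivAt (fun s : ℝ => (x, s)) ((0 : ℝ), (1 : ℝ)) y :=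
    (hasDerivAt_const y x).prodMk (hasDerivAt_id y)
  have h2 := (((hg.differentiable (by simp)) (x, y)).hasFDerivAt).comp_hasDerivAt y h1
  simpa [pdy, Function.comp_def] using h2.deriv

lemma smooth_fderiv_apply (g : ℝ → ℝ → ℝ) (hg : ContDiff ℝ (⊤ : ℕ∞) (fun w : ℝ × ℝ => g w.1 w.2))
    (v : ℝ × ℝ) :
    ContDiff ℝ (⊤ : ℕ∞) (fun w : ℝ × ℝ => fderiv ℝ (fun w : ℝ × ℝ => g w.1 w.2) w v) := by
  have h1 : ContDiff ℝ (⊤ : ℕ∞) (fderiv ℝ (fun w : ℝ × ℝ => g w.1 w.2)) :=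
    hg.fderiv_right (by simp)
  exact (ContinuousLinearMap.apply ℝ ℝ v).contDiff.comp h1
lemma hd_pdx_fst (g : ℝ → ℝ → ℝ) (hg : ContDiff ℝ (⊤ : ℕ∞) (fun w : ℝ × ℝ => g w.1 w.2)) (x y : ℝ) :
    HasDerivAt (fun t => pdx g t y) (pdx (pdx g) x y) x := by
  have hdiff : DifferentiableAt ℝ (fun t => pdx g t y) x := by
    have heq : (fun t => pdx g t y)
        = fun t => fderiv ℝ (fun w : ℝ × ℝ => g w.1 w.2) (t, y) (1, 0) :=
      funext fun t => pdx_eq_fderiv g hg t y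
    rw [heq]
    exact (((smooth_fderiv_apply g hg (1, 0)).differentiable (by simp)).comp
      ((differentiable_id (𝕜 := ℝ)).prodMk (differentiable_const y))).differentiableAt
  simpa [pdx] using hdiff.hasDerivAt

lemma hd_pdx_snd (g : ℝ → ℝ → ℝ) (hg : ContDiff ℝ (⊤ : ℕ∞) (fun w : ℝ × ℝ => g w.1 w.2)) (x y : ℝ) :
    HasDerivAt (fun s => pdx g x s) (pdy (pdx g) x y) y := by
  have hdiff : DifferentiableAt ℝ (fun s => pdx g x s) y := by
    have heq : (fun s => pdx g x s)
        = fun s => fderiv ℝ (fun w : ℝ × ℝ => g w.1 w.2) (x, s) (1, 0) :=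
      funext fun s => pdx_eq_fderiv g hg x s
    rw [heq]
    exact (((smooth_fderiv_apply g hg (1, 0)).differentiable (by simp)).comp
      ((differentiable_const (𝕜 := ℝ) x).prodMk differentiable_id)).differentiableAt
  simpa [pdy] using hdiff.hasDerivAt

lemma hd_pdy_fst (g : ℝ → ℝ → ℝ) (hg : ContDiff ℝ (⊤ : ℕ∞) (fun w : ℝ × ℝ => g w.1 w.2)) (x y : ℝ) :
    HasDerivAt (fun t => pdy g t y) (pdx (pdy g) x y) x := by
  have hdiff : DifferentiableAt ℝ (fun t => pdy g t y) x := by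
    have heq : (fun t => pdy g t y)
        = fun t => fderiv ℝ (fun w : ℝ × ℝ => g w.1 w.2) (t, y) (0, 1) :=
      funext fun t => pdy_eq_fderiv g hg t y
    rw [heq]
    exact (((smooth_fderiv_apply g hg (0, 1)).differentiable (by simp)).comp
      ((differentiable_id (𝕜 := ℝ)).prodMk (differentiable_const y))).differentiableAt
  simpa [pdx] using hdiff.hasDerivAt

lemma hd_pdy_snd (g : ℝ → ℝ → ℝ) (hg : ContDiff ℝ (⊤ : ℕ∞) (fun w : ℝ × ℝ => g w.1 w.2)) (x y : ℝ) :
    HasDerivAt (fun s => pdy g x s) (pdy (pdy g) x y) y := by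
  have hdiff : DifferentiableAt ℝ (fun s => pdy g x s) y := by
    have heq : (fun s => pdy g x s)
        = fun s => fderiv ℝ (fun w : ℝ × ℝ => g w.1 w.2) (x, s) (0, 1) :=
      funext fun s => pdy_eq_fderiv g hg x s
    rw [heq]
    exact (((smooth_fderiv_apply g hg (0, 1)).differentiable (by simp)).comp
      ((differentiable_const (𝕜 := ℝ) x).prodMk differentiable_id)).differentiableAt
  simpa [pdy] using hdiff.hasDerivAt

lemma hess_core (b₂₀ : ℝ) (p q r : ℝ → ℝ → ℝ)
    (hp : ContDiff ℝ (⊤ : ℕ∞) (fun w : ℝ × ℝ => p w.1 w.2))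
    (hq : ContDiff ℝ (⊤ : ℕ∞) (fun w : ℝ × ℝ => q w.1 w.2))
    (hr : ContDiff ℝ (⊤ : ℕ∞) (fun w : ℝ × ℝ => r w.1 w.2))
    (hpj : jet2ZeroAt0 p) (hqj : jet2ZeroAt0 q) (hrj : jet2ZeroAt0 r)
    (v₂ v₃ v₄ : ℝ) :
    hessAt0 (fun x y => x ^ 2 + (p x y - v₂) ^ 2
      + (b₂₀ * x ^ 2 + q x y - v₃) ^ 2 + (r x y - v₄) ^ 2)
      = !![2 - 4 * b₂₀ * v₃, 0; 0, 0] := by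
  obtain ⟨hp0, hpx, hpy, hpH⟩ := hpj
  obtain ⟨hq0, hqx, hqy, hqH⟩ := hqj
  obtain ⟨hr0, hrx, hry, hrH⟩ := hrj
  have hpxx : pdx (pdx p) 0 0 = 0 := by
    have := congrFun (congrFun hpH 0) 0; simpa [hessAt0] using this
  have hpxy : pdy (pdx p) 0 0 = 0 := by
    have := congrFun (congrFun hpH 0) 1; simpa [hessAt0] using this
  have hpyx : pdx (pdy p) 0 0 = 0 := by
    have := congrFun (congrFun hpH 1) 0; simpa [hessAt0] using this
  have hpyy : pdy (pdy p) 0 0 = 0 := by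
    have := congrFun (congrFun hpH 1) 1; simpa [hessAt0] using this
  have hqxx : pdx (pdx q) 0 0 = 0 := by
    have := congrFun (congrFun hqH 0) 0; simpa [hessAt0] using this
  have hqxy : pdy (pdx q) 0 0 = 0 := by
    have := congrFun (congrFun hqH 0) 1; simpa [hessAt0] using this
  have hqyx : pdx (pdy q) 0 0 = 0 := by
    have := congrFun (congrFun hqH 1) 0; simpa [hessAt0] using this
  have hqyy : pdy (pdy q) 0 0 = 0 := by
    have := congrFun (congrFun hqH 1) 1; simpa [hessAt0] using this
  have hrxx : pdx (pdx r) 0 0 = 0 := by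
    have := congrFun (congrFun hrH 0) 0; simpa [hessAt0] using this
  have hrxy : pdy (pdx r) 0 0 = 0 := by
    have := congrFun (congrFun hrH 0) 1; simpa [hessAt0] using this
  have hryx : pdx (pdy r) 0 0 = 0 := by
    have := congrFun (congrFun hrH 1) 0; simpa [hessAt0] using this
  have hryy : pdy (pdy r) 0 0 = 0 := by
    have := congrFun (congrFun hrH 1) 1; simpa [hessAt0] using this
  set d : ℝ → ℝ → ℝ := fun x y => x ^ 2 + (p x y - v₂) ^ 2
      + (b₂₀ * x ^ 2 + q x y - v₃) ^ 2 + (r x y - v₄) ^ 2 with hdef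
  -- first partial derivative formulas
  have pdxd_eq : ∀ x y, pdx d x y = 2*x + 2*(p x y - v₂)*pdx p x y
      + 2*(b₂₀*x^2 + q x y - v₃)*(2*b₂₀*x + pdx q x y)
      + 2*(r x y - v₄)*pdx r x y := by
    intro x y
    have H := (((hasDerivAt_pow 2 x).add (((hd_fst p hp x y).sub_const v₂).pow 2)).add
      ((((HasDerivAt.const_mul b₂₀ (hasDerivAt_pow 2 x)).add
        (hd_fst q hq x y)).sub_const v₃).pow 2)).add
      (((hd_fst r hr x y).sub_const v₄).pow 2)
    have H' : HasDerivAt (fun t => t ^ 2 + (p t y - v₂) ^ 2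
        + (b₂₀ * t ^ 2 + q t y - v₃) ^ 2 + (r t y - v₄) ^ 2)
        (2*x + 2*(p x y - v₂)*pdx p x y
          + 2*(b₂₀*x^2 + q x y - v₃)*(2*b₂₀*x + pdx q x y)
          + 2*(r x y - v₄)*pdx r x y) x := by
      refine H.congr_deriv ?_
      simp only [Pi.add_apply]
      push_cast; ring
    simpa [pdx, hdef] using H'.deriv
  have pdyd_eq : ∀ x y, pdy d x y = 2*(p x y - v₂)*pdy p x y
      + 2*(b₂₀*x^2 + q x y - v₃)*pdy q x y + 2*(r x y - v₄)*pdy r x y := by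
    intro x y
    have H := ((HasDerivAt.const_add (x^2)
        (((hd_snd p hp x y).sub_const v₂).pow 2)).add
      (((HasDerivAt.const_add (b₂₀*x^2) (hd_snd q hq x y)).sub_const v₃).pow 2)).add
      (((hd_snd r hr x y).sub_const v₄).pow 2)
    have H' : HasDerivAt (fun s => x ^ 2 + (p x s - v₂) ^ 2
        + (b₂₀ * x ^ 2 + q x s - v₃) ^ 2 + (r x s - v₄) ^ 2)
        (2*(p x y - v₂)*pdy p x y + 2*(b₂₀*x^2 + q x y - v₃)*pdy q x y
          + 2*(r x y - v₄)*pdy r x y) y := by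
      refine H.congr_deriv ?_
      push_cast; ring
    simpa [pdy, hdef] using H'.deriv
  -- entry (0,0)
  have e00 : pdx (pdx d) 0 0 = 2 - 4*b₂₀*v₃ := by
    have heq : (fun t => pdx d t 0) = (fun t => 2*t + 2*(p t 0 - v₂)*pdx p t 0
        + 2*(b₂₀*t^2 + q t 0 - v₃)*(2*b₂₀*t + pdx q t 0)
        + 2*(r t 0 - v₄)*pdx r t 0) := funext fun t => pdxd_eq t 0
    have H := (((HasDerivAt.const_mul 2 (hasDerivAt_id (0:ℝ))).add
        ((HasDerivAt.const_mul 2 ((hd_fst p hp 0 0).sub_const v₂)).mul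
          (hd_pdx_fst p hp 0 0))).add
      ((HasDerivAt.const_mul 2 (((HasDerivAt.const_mul b₂₀ (hasDerivAt_pow 2 (0:ℝ))).add
          (hd_fst q hq 0 0)).sub_const v₃)).mul
        ((HasDerivAt.const_mul (2*b₂₀) (hasDerivAt_id (0:ℝ))).add
          (hd_pdx_fst q hq 0 0)))).add
      ((HasDerivAt.const_mul 2 ((hd_fst r hr 0 0).sub_const v₄)).mul
        (hd_pdx_fst r hr 0 0))
    have H' : HasDerivAt (fun t => 2*t + 2*(p t 0 - v₂)*pdx p t 0
        + 2*(b₂₀*t^2 + q t 0 - v₃)*(2*b₂₀*t + pdx q t 0)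
        + 2*(r t 0 - v₄)*pdx r t 0) (2 - 4*b₂₀*v₃) 0 := by
      refine H.congr_deriv ?_
      simp only [Pi.add_apply, id]
      rw [hp0, hpx, hpxx, hq0, hqx, hqxx, hr0, hrx, hrxx]
      push_cast; ring
    have e : pdx (pdx d) 0 0 = deriv (fun t => pdx d t 0) 0 := rfl
    rw [e, heq]; exact H'.deriv
  -- entry (0,1)
  have e01 : pdy (pdx d) 0 0 = 0 := by
    have heq : (fun s => pdx d 0 s) = (fun s => 2*0 + 2*(p 0 s - v₂)*pdx p 0 s
        + 2*(b₂₀*0^2 + q 0 s - v₃)*(2*b₂₀*0 + pdx q 0 s)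
        + 2*(r 0 s - v₄)*pdx r 0 s) := funext fun s => pdxd_eq 0 s
    have H := (((hasDerivAt_const (0:ℝ) (2*(0:ℝ))).add
        ((HasDerivAt.const_mul 2 ((hd_snd p hp 0 0).sub_const v₂)).mul
          (hd_pdx_snd p hp 0 0))).add
      ((HasDerivAt.const_mul 2 ((HasDerivAt.const_add (b₂₀*0^2)
          (hd_snd q hq 0 0)).sub_const v₃)).mul
        (HasDerivAt.const_add (2*b₂₀*0) (hd_pdx_snd q hq 0 0)))).add
      ((HasDerivAt.const_mul 2 ((hd_snd r hr 0 0).sub_const v₄)).mul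
        (hd_pdx_snd r hr 0 0))
    have H' : HasDerivAt (fun s => 2*0 + 2*(p 0 s - v₂)*pdx p 0 s
        + 2*(b₂₀*0^2 + q 0 s - v₃)*(2*b₂₀*0 + pdx q 0 s)
        + 2*(r 0 s - v₄)*pdx r 0 s) 0 0 := by
      refine H.congr_deriv ?_
      rw [hp0, hpx, hpy, hpxy, hq0, hqx, hqy, hqxy, hr0, hrx, hry, hrxy]
      push_cast; ring
    have e : pdy (pdx d) 0 0 = deriv (fun s => pdx d 0 s) 0 := rfl
    rw [e, heq]; exact H'.deriv
  -- entry (1,0)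
  have e10 : pdx (pdy d) 0 0 = 0 := by
    have heq : (fun t => pdy d t 0) = (fun t => 2*(p t 0 - v₂)*pdy p t 0
        + 2*(b₂₀*t^2 + q t 0 - v₃)*pdy q t 0
        + 2*(r t 0 - v₄)*pdy r t 0) := funext fun t => pdyd_eq t 0
    have H := (((HasDerivAt.const_mul 2 ((hd_fst p hp 0 0).sub_const v₂)).mul
        (hd_pdy_fst p hp 0 0)).add
      ((HasDerivAt.const_mul 2 (((HasDerivAt.const_mul b₂₀ (hasDerivAt_pow 2 (0:ℝ))).add
          (hd_fst q hq 0 0)).sub_const v₃)).mul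
        (hd_pdy_fst q hq 0 0))).add
      ((HasDerivAt.const_mul 2 ((hd_fst r hr 0 0).sub_const v₄)).mul
        (hd_pdy_fst r hr 0 0))
    have H' : HasDerivAt (fun t => 2*(p t 0 - v₂)*pdy p t 0
        + 2*(b₂₀*t^2 + q t 0 - v₃)*pdy q t 0
        + 2*(r t 0 - v₄)*pdy r t 0) 0 0 := by
      refine H.congr_deriv ?_
      simp only [Pi.add_apply]
      rw [hp0, hpx, hpy, hpyx, hq0, hqx, hqy, hqyx, hr0, hrx, hry, hryx]
      push_cast; ring
    have e : pdx (pdy d) 0 0 = deriv (fun t => pdy d t 0) 0 := rfl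
    rw [e, heq]; exact H'.deriv
  -- entry (1,1)
  have e11 : pdy (pdy d) 0 0 = 0 := by
    have heq : (fun s => pdy d 0 s) = (fun s => 2*(p 0 s - v₂)*pdy p 0 s
        + 2*(b₂₀*0^2 + q 0 s - v₃)*pdy q 0 s
        + 2*(r 0 s - v₄)*pdy r 0 s) := funext fun s => pdyd_eq 0 s
    have H := (((HasDerivAt.const_mul 2 ((hd_snd p hp 0 0).sub_const v₂)).mul
        (hd_pdy_snd p hp 0 0)).add
      ((HasDerivAt.const_mul 2 ((HasDerivAt.const_add (b₂₀*0^2)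
          (hd_snd q hq 0 0)).sub_const v₃)).mul
        (hd_pdy_snd q hq 0 0))).add
      ((HasDerivAt.const_mul 2 ((hd_snd r hr 0 0).sub_const v₄)).mul
        (hd_pdy_snd r hr 0 0))
    have H' : HasDerivAt (fun s => 2*(p 0 s - v₂)*pdy p 0 s
        + 2*(b₂₀*0^2 + q 0 s - v₃)*pdy q 0 s
        + 2*(r 0 s - v₄)*pdy r 0 s) 0 0 := by
      refine H.congr_deriv ?_
      rw [hp0, hpy, hpyy, hq0, hqy, hqyy, hr0, hry, hryy]
      push_cast; ring
    have e : pdy (pdy d) 0 0 = deriv (fun s => pdy d 0 s) 0 := rfl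
    rw [e, heq]; exact H'.deriv
  simp only [hessAt0, e00, e01, e10, e11]

/-- For the normal form `f(x,y) = (x, p, b₂₀x² + q, r)` with `b₂₀ ≠ 0` (a non-flat umbilic
𝓜₁-point) and `a = (0, v₂, v₃, v₄)`, the Hessian of `d_a` at the origin equals
`[[2 − 4b₂₀v₃, 0], [0, 0]]`; it is always degenerate, and zero iff `v₃ = 1/(2b₂₀)`;
the umbilical foci form the plane `{(0, t, 1/(2b₂₀), s)}`. -/
theorem stmt12 (b₂₀ : ℝ) (hb₂₀ : b₂₀ ≠ 0) (p q r : ℝ → ℝ → ℝ)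
    (hp : ContDiff ℝ (⊤ : ℕ∞) (fun w : ℝ × ℝ => p w.1 w.2))
    (hq : ContDiff ℝ (⊤ : ℕ∞) (fun w : ℝ × ℝ => q w.1 w.2))
    (hr : ContDiff ℝ (⊤ : ℕ∞) (fun w : ℝ × ℝ => r w.1 w.2))
    (hpj : jet2ZeroAt0 p) (hqj : jet2ZeroAt0 q) (hrj : jet2ZeroAt0 r) :
    (∀ v₂ v₃ v₄ : ℝ,
      hessAt0 (fun x y => x ^ 2 + (p x y - v₂) ^ 2
        + (b₂₀ * x ^ 2 + q x y - v₃) ^ 2 + (r x y - v₄) ^ 2)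
        = !![2 - 4 * b₂₀ * v₃, 0; 0, 0] ∧
      ((hessAt0 (fun x y => x ^ 2 + (p x y - v₂) ^ 2
        + (b₂₀ * x ^ 2 + q x y - v₃) ^ 2 + (r x y - v₄) ^ 2)).det = 0) ∧
      (hessAt0 (fun x y => x ^ 2 + (p x y - v₂) ^ 2
        + (b₂₀ * x ^ 2 + q x y - v₃) ^ 2 + (r x y - v₄) ^ 2) = 0 ↔
        v₃ = 1 / (2 * b₂₀))) ∧
    ({w : ℝ × ℝ × ℝ |
        hessAt0 (fun x y => x ^ 2 + (p x y - w.1) ^ 2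
          + (b₂₀ * x ^ 2 + q x y - w.2.1) ^ 2 + (r x y - w.2.2) ^ 2) = 0}
      = {w : ℝ × ℝ × ℝ | w.2.1 = 1 / (2 * b₂₀)}) := by
  have key := hess_core b₂₀ p q r hp hq hr hpj hqj hrj
  have main : ∀ v₂ v₃ v₄ : ℝ,
      hessAt0 (fun x y => x ^ 2 + (p x y - v₂) ^ 2
        + (b₂₀ * x ^ 2 + q x y - v₃) ^ 2 + (r x y - v₄) ^ 2)
        = !![2 - 4 * b₂₀ * v₃, 0; 0, 0] ∧
      ((hessAt0 (fun x y => x ^ 2 + (p x y - v₂) ^ 2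
        + (b₂₀ * x ^ 2 + q x y - v₃) ^ 2 + (r x y - v₄) ^ 2)).det = 0) ∧
      (hessAt0 (fun x y => x ^ 2 + (p x y - v₂) ^ 2
        + (b₂₀ * x ^ 2 + q x y - v₃) ^ 2 + (r x y - v₄) ^ 2) = 0 ↔
        v₃ = 1 / (2 * b₂₀)) := by
    intro v₂ v₃ v₄
    have h := key v₂ v₃ v₄
    refine ⟨h, ?_, ?_⟩
    · rw [h]; simp [Matrix.det_fin_two_of]
    · rw [h]
      constructor
      · intro h0
        have h1 := congrFun (congrFun h0 0) 0
        simp at h1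
        have h2b : (2 : ℝ) * b₂₀ ≠ 0 := by positivity
        rw [eq_div_iff h2b]
        linear_combination (-1/2 : ℝ) * h1
      · intro hv
        have hz : 2 - 4 * b₂₀ * v₃ = 0 := by rw [hv]; field_simp; ring
        rw [hz]
        ext i j
        fin_cases i <;> fin_cases j <;> simp
  exact ⟨main, by ext ⟨a, b, c⟩; simpa using (main a b c).2.2⟩
end

section
/- Let a_i, b_i, c_i, d_i, r_i, s_i ∈ ℝ for i = 1, 2, 3, define M_i, S_v, H, B₁, …, B₅ as follows: M_i = [[a_i, b_i, c_i], [b_i, d_i, r_i], [c_i, r_i, s_i]], S_v = Σ_{i=1}^{3} v_i M_i for v ∈ ℝ³, H = ((a_i + d_i + s_i)/3)_{i}, B₁ = ((−a_i − d_i + 2s_i)/12)_{i}, B₂ = ((a_i − d_i)/2)_{i}, B₃ = (b_i)_{i}, B₄ = (c_i)_{i}, B₅ = (r_i)_{i}. Suppose the linear span W of {B₁, …, B₅} in ℝ³ has dimension 2, and let v₀ be a unit vector orthogonal to W with ⟨H, v₀⟩ ≠ 0. Then the set {ν ∈ ℝ³ : S_ν = I₃} consists of exactly one element, namely ν = (1/⟨H,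 v₀⟩)·v₀. -/
/-!
Writing `a = H - 2B₁ + B₂`, `d = H - 2B₁ - B₂`, `s = H + 4B₁`, the matrix `S_ν` splits as
`⟪H, ν⟫ • I₃` plus a trace-free matrix whose entries are linear in the `⟪Bₖ, ν⟫`. Hence
`S_ν = I₃` exactly when `⟪H, ν⟫ = 1` and `ν ⊥ W`. As `dim W = 2`, `Wᗮ` is the line spanned by `v₀`,
and the only point of that line with `⟪H, ν⟫ = 1` is `(1 / ⟪H, v₀⟫) • v₀`.
-/

open scoped RealInnerProductSpace
open Module Submodule

theorem mem_orthogonal_span_iff {𝕜 E : Type*} [RCLike 𝕜] [NormedAddCommGroup E]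
    [InnerProductSpace 𝕜 E] {s : Set E} {v : E} :
    v ∈ (span 𝕜 s)ᗮ ↔ ∀ u ∈ s, inner 𝕜 u v = 0 := by
  rw [← span_singleton_le_iff_mem, ← isOrtho_iff_le, isOrtho_comm, isOrtho_span]
  simp

theorem orthogonal_eq_span_singleton {𝕜 E : Type*} [RCLike 𝕜] [NormedAddCommGroup E]
    [InnerProductSpace 𝕜 E] [FiniteDimensional 𝕜 E] {K : Submodule 𝕜 E}
    (hK : finrank 𝕜 K + 1 = finrank 𝕜 E) {v : E} (hv : v ∈ Kᗮ) (hv0 : v ≠ 0) :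
    Kᗮ = 𝕜 ∙ v := by
  refine (eq_of_le_of_finrank_le ((span_singleton_le_iff_mem _ _).mpr hv) ?_).symm
  have := K.finrank_add_finrank_orthogonal
  rw [finrank_span_singleton hv0]
  omega

theorem mem_span_singleton_and_inner_eq_one_iff {E : Type*} [NormedAddCommGroup E]
    [InnerProductSpace ℝ E] {H v : E} (hHv : ⟪H, v⟫ ≠ 0) (ν : E) :
    ν ∈ ℝ ∙ v ∧ ⟪H, ν⟫ = 1 ↔ ν = (1 / ⟪H, v⟫) • v := by
  constructor
  · rintro ⟨hν, h⟩
    obtain ⟨t, rfl⟩ := mem_span_singleton.mp hν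
    rw [inner_smul_right] at h
    rw [eq_div_iff hHv |>.mpr h]
  · rintro rfl
    exact ⟨smul_mem _ _ (mem_span_singleton_self v), by rw [inner_smul_right]; field_simp⟩

theorem real_inner_fin_three (x y : EuclideanSpace ℝ (Fin 3)) :
    ⟪x, y⟫ = x 0 * y 0 + x 1 * y 1 + x 2 * y 2 := by
  simp only [PiLp.inner_apply, RCLike.inner_apply, Real.ringHom_apply, Fin.sum_univ_three]
  ring

/-- The trace-free part of `S_ν`, in the coordinates `βₖ = ⟪Bₖ, ν⟫`. -/
def tracelessShape (β₁ β₂ β₃ β₄ β₅ : ℝ) : Matrix (Fin 3) (Fin 3) ℝ :=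
  !![-2 * β₁ + β₂, β₃, β₄; β₃, -2 * β₁ - β₂, β₅; β₄, β₅, 4 * β₁]

theorem smul_one_add_tracelessShape_eq_one_iff (μ β₁ β₂ β₃ β₄ β₅ : ℝ) :
    μ • (1 : Matrix (Fin 3) (Fin 3) ℝ) + tracelessShape β₁ β₂ β₃ β₄ β₅ = 1 ↔
      μ = 1 ∧ β₁ = 0 ∧ β₂ = 0 ∧ β₃ = 0 ∧ β₄ = 0 ∧ β₅ = 0 := by
  constructor
  · intro h
    have e (i j : Fin 3) := congrFun (congrFun h i) j
    have e00 := e 0 0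
    have e01 := e 0 1
    have e02 := e 0 2
    have e11 := e 1 1
    have e12 := e 1 2
    have e22 := e 2 2
    simp [tracelessShape] at e00 e01 e02 e11 e12 e22
    refine ⟨?_, ?_, ?_, ?_, ?_, ?_⟩ <;> linarith
  · rintro ⟨rfl, rfl, rfl, rfl, rfl, rfl⟩
    ext i j
    fin_cases i <;> fin_cases j <;> simp [tracelessShape]

theorem sum_smul_eq_smul_one_add_tracelessShape (a b c d r s : Fin 3 → ℝ)
    (B₁ B₂ B₃ B₄ B₅ H ν : EuclideanSpace ℝ (Fin 3))
    (hB₁ : ∀ i, B₁ i = (-a i - d i + 2 * s i) / 12)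
    (hB₂ : ∀ i, B₂ i = (a i - d i) / 2)
    (hB₃ : ∀ i, B₃ i = b i)
    (hB₄ : ∀ i, B₄ i = c i)
    (hB₅ : ∀ i, B₅ i = r i)
    (hH : ∀ i, H i = (a i + d i + s i) / 3) :
    ∑ i : Fin 3, ν i • !![a i, b i, c i; b i, d i, r i; c i, r i, s i] =
      ⟪H, ν⟫ • 1 + tracelessShape ⟪B₁, ν⟫ ⟪B₂, ν⟫ ⟪B₃, ν⟫ ⟪B₄, ν⟫ ⟪B₅, ν⟫ := by
  simp only [real_inner_fin_three, hB₁, hB₂, hB₃, hB₄, hB₅, hH]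
  ext i j
  fin_cases i <;> fin_cases j <;> simp [tracelessShape, Fin.sum_univ_three] <;> ring

theorem stmt16_general (a b c d r s : Fin 3 → ℝ)
    (B₁ B₂ B₃ B₄ B₅ H v₀ : EuclideanSpace ℝ (Fin 3))
    (hB₁ : ∀ i, B₁ i = (-a i - d i + 2 * s i) / 12)
    (hB₂ : ∀ i, B₂ i = (a i - d i) / 2)
    (hB₃ : ∀ i, B₃ i = b i)
    (hB₄ : ∀ i, B₄ i = c i)
    (hB₅ : ∀ i, B₅ i = r i)
    (hH : ∀ i, H i = (a i + d i + s i) / 3)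
    (hW : Module.finrank ℝ
      (Submodule.span ℝ ({B₁, B₂, B₃, B₄, B₅} : Set (EuclideanSpace ℝ (Fin 3)))) = 2)
    (hv₀W : ∀ w ∈ Submodule.span ℝ ({B₁, B₂, B₃, B₄, B₅} : Set (EuclideanSpace ℝ (Fin 3))),
      ⟪v₀, w⟫ = 0)
    (hHv₀ : ⟪H, v₀⟫ ≠ 0) :
    {ν : EuclideanSpace ℝ (Fin 3) |
        (∑ i : Fin 3, ν i • !![a i, b i, c i; b i, d i, r i; c i, r i, s i])
          = (1 : Matrix (Fin 3) (Fin 3) ℝ)}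
      = {(1 / ⟪H, v₀⟫) • v₀} := by
  have hv₀ : v₀ ≠ 0 := fun h => hHv₀ (by simp [h])
  have hWperp : (span ℝ ({B₁, B₂, B₃, B₄, B₅} : Set (EuclideanSpace ℝ (Fin 3))))ᗮ = ℝ ∙ v₀ :=
    orthogonal_eq_span_singleton (by simp [hW]) ((mem_orthogonal' _ _).mpr hv₀W) hv₀
  ext ν
  rw [Set.mem_ofPred_eq, Set.mem_singleton_iff,
    sum_smul_eq_smul_one_add_tracelessShape a b c d r s B₁ B₂ B₃ B₄ B₅ H ν hB₁ hB₂ hB₃ hB₄ hB₅ hH,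
    smul_one_add_tracelessShape_eq_one_iff, ← mem_span_singleton_and_inner_eq_one_iff hHv₀,
    ← hWperp, mem_orthogonal_span_iff]
  simp only [Set.mem_insert_iff, Set.mem_singleton_iff, forall_eq_or_imp, forall_eq]
  tauto

/-- Suppose the span `W` of `B₁,…,B₅` is 2-dimensional and `v₀` is a unit vector orthogonal
to `W` with `⟨H, v₀⟩ ≠ 0`. Then there is a unique `ν` with `S_ν = I₃`, namely
`ν = (1/⟨H, v₀⟩) • v₀` (the unique umbilical focus of the 3-manifold). -/
theorem stmt16 (a b c d r s : Fin 3 → ℝ)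
    (B₁ B₂ B₃ B₄ B₅ H v₀ : EuclideanSpace ℝ (Fin 3))
    (hB₁ : ∀ i, B₁ i = (-a i - d i + 2 * s i) / 12)
    (hB₂ : ∀ i, B₂ i = (a i - d i) / 2)
    (hB₃ : ∀ i, B₃ i = b i)
    (hB₄ : ∀ i, B₄ i = c i)
    (hB₅ : ∀ i, B₅ i = r i)
    (hH : ∀ i, H i = (a i + d i + s i) / 3)
    (hW : Module.finrank ℝ
      (Submodule.span ℝ ({B₁, B₂, B₃, B₄, B₅} : Set (EuclideanSpace ℝ (Fin 3)))) = 2)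
    (hv₀ : ‖v₀‖ = 1)
    (hv₀W : ∀ w ∈ Submodule.span ℝ ({B₁, B₂, B₃, B₄, B₅} : Set (EuclideanSpace ℝ (Fin 3))),
      ⟪v₀, w⟫ = 0)
    (hHv₀ : ⟪H, v₀⟫ ≠ 0) :
    {ν : EuclideanSpace ℝ (Fin 3) |
        (∑ i : Fin 3, ν i • !![a i, b i, c i; b i, d i, r i; c i, r i, s i])
          = (1 : Matrix (Fin 3) (Fin 3) ℝ)}
      = {(1 / ⟪H, v₀⟫) • v₀} :=
  stmt16_general a b c d r s B₁ B₂ B₃ B₄ B₅ H v₀ hB₁ hB₂ hB₃ hB₄ hB₅ hH hW hv₀W hHv₀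
end
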